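/- arXiv:2509.00858 — 10 statements merged into one kernel-verified Lean document; each statement's English description precedes it below -/
import Mathlib

section
/- Let n ≥ 2, d ≥ 1, and δ > 1. Let P_1, …, P_n be points in ℝ^d such that the Euclidean distance between any two distinct points lies in {1, δ}, and suppose that for some h with 0 ≤ h ≤ n−1 we have ‖P_i − P_n‖ = 1 for 1 ≤ i ≤ h and ‖P_i − P_n‖ = δ for h < i ≤ n−1. Define the (n−1)×(n−1) matrices M and D by M_{ij} = ‖P_i − P_n‖² + ‖P_j − P_n‖² − ‖P_i − P_j‖², and D_{ij} = δ² − 3 if i, j ≤ h, D_{ij} = −(1 + δ²) if exactly one of i, j is ≤ h, and D_{ij} = 1 − 3δ² if i, j > h. Then the matrix S = (2M + D − (1 + δ²)·I)/(δ² − 1) is a Seidel matrix: it is symmetric, has zero diagonal, and all its off-diagonal entries equal 1 or −1. -/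
/-!
Write `aᵢ = ‖Pᵢ - Pₙ‖²`, so `aᵢ = 1` for `i ≤ h` and `aᵢ = δ²` otherwise. The block matrix is then
`D_{ij} = 1 + δ² - 2aᵢ - 2aⱼ`, so the terms `aᵢ + aⱼ` of `2M` cancel and
`2M + D - (1 + δ²)I` has entries `1 + δ² - 2‖Pᵢ - Pⱼ‖²` off the diagonal and `0` on it.
The affine map `r ↦ (1 + δ² - 2r)/(δ² - 1)` sends the two squared distances `1` and `δ²`
to `1` and `-1`.
-/

namespace Matrix

variable {ι R : Type*}

def IsSeidel [Zero R] [One R] [Neg R] (S : Matrix ι ι R) : Prop :=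
  S.IsSymm ∧ (∀ i, S i i = 0) ∧ ∀ i j, i ≠ j → S i j = 1 ∨ S i j = -1

end Matrix

section TwoDistance

variable {ι E : Type*} [DecidableEq ι] [PseudoMetricSpace E]

noncomputable def twoDistanceSeidel (x : ι → E) (δ : ℝ) : Matrix ι ι ℝ :=
  Matrix.of fun i j => if i = j then 0 else (1 + δ ^ 2 - 2 * dist (x i) (x j) ^ 2) / (δ ^ 2 - 1)

lemma affine_dist_sq_eq_one_or_neg_one {δ r : ℝ} (hδ : 1 < δ) (hr : r = 1 ∨ r = δ) :
    (1 + δ ^ 2 - 2 * r ^ 2) / (δ ^ 2 - 1) = 1 ∨ (1 + δ ^ 2 - 2 * r ^ 2) / (δ ^ 2 - 1) = -1 := by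
  have hδ2 : δ ^ 2 - 1 ≠ 0 := by nlinarith
  rcases hr with rfl | rfl
  · left
    field_simp
    ring
  · right
    field_simp
    ring

lemma isSeidel_twoDistanceSeidel {x : ι → E} {δ : ℝ} (hδ : 1 < δ)
    (hx : ∀ i j, i ≠ j → dist (x i) (x j) = 1 ∨ dist (x i) (x j) = δ) :
    (twoDistanceSeidel x δ).IsSeidel := by
  refine ⟨?_, fun i => by simp [twoDistanceSeidel], fun i j hij => ?_⟩
  · ext i j
    simp only [Matrix.transpose_apply, twoDistanceSeidel, Matrix.of_apply, eq_comm (a := i),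
      dist_comm (x i)]
  · simpa [twoDistanceSeidel, hij] using affine_dist_sq_eq_one_or_neg_one hδ (hx i j hij)

lemma eq_twoDistanceSeidel (x : ι → E) (p : E) (δ : ℝ) (M D S : Matrix ι ι ℝ)
    (hM : ∀ i j, M i j = dist (x i) p ^ 2 + dist (x j) p ^ 2 - dist (x i) (x j) ^ 2)
    (hD : ∀ i j, D i j = 1 + δ ^ 2 - 2 * dist (x i) p ^ 2 - 2 * dist (x j) p ^ 2)
    (hS : S = (δ ^ 2 - 1)⁻¹ • ((2 : ℝ) • M + D - (1 + δ ^ 2) • (1 : Matrix ι ι ℝ))) :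
    S = twoDistanceSeidel x δ := by
  ext i j
  rw [hS]
  by_cases hij : i = j
  · subst hij
    simp only [Matrix.smul_apply, Matrix.sub_apply, Matrix.add_apply, Matrix.one_apply_eq, hM,
      hD, twoDistanceSeidel, Matrix.of_apply, if_true, dist_self, smul_eq_mul]
    ring
  · simp only [Matrix.smul_apply, Matrix.sub_apply, Matrix.add_apply, Matrix.one_apply_ne hij,
      hM, hD, twoDistanceSeidel, Matrix.of_apply, if_neg hij, smul_eq_mul]
    rw [div_eq_inv_mul]
    ring

end TwoDistance

lemma block_entry_eq (δ : ℝ) (h i j : ℕ) :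
    (if i < h ∧ j < h then δ ^ 2 - 3 else if i < h ∨ j < h then -(1 + δ ^ 2) else 1 - 3 * δ ^ 2) =
      1 + δ ^ 2 - 2 * (if i < h then 1 else δ) ^ 2 - 2 * (if j < h then 1 else δ) ^ 2 := by
  by_cases hi : i < h <;> by_cases hj : j < h <;> simp [hi, hj] <;> ring

/-- The matrix `S = (2M + D - (1+δ²)I)/(δ²-1)` built from the
Cayley–Menger matrix `M` of a two-distance set and the auxiliary block matrix `D`
is a Seidel matrix: symmetric, zero diagonal, off-diagonal entries `±1`. -/
theorem stmt0 (n d : ℕ) (hn : 2 ≤ n) (δ : ℝ) (hδ : 1 < δ)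
    (P : Fin n → EuclideanSpace ℝ (Fin d))
    (hdist : ∀ i j : Fin n, i ≠ j → dist (P i) (P j) = 1 ∨ dist (P i) (P j) = δ)
    (h : ℕ)
    (hone : ∀ i : Fin (n - 1), (i : ℕ) < h →
      dist (P (Fin.castLE (by omega) i)) (P ⟨n - 1, by omega⟩) = 1)
    (hdel : ∀ i : Fin (n - 1), h ≤ (i : ℕ) →
      dist (P (Fin.castLE (by omega) i)) (P ⟨n - 1, by omega⟩) = δ)
    (M D S : Matrix (Fin (n - 1)) (Fin (n - 1)) ℝ)
    (hM : ∀ i j : Fin (n - 1), M i j =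
      dist (P (Fin.castLE (by omega) i)) (P ⟨n - 1, by omega⟩) ^ 2 +
      dist (P (Fin.castLE (by omega) j)) (P ⟨n - 1, by omega⟩) ^ 2 -
      dist (P (Fin.castLE (by omega) i)) (P (Fin.castLE (by omega) j)) ^ 2)
    (hD : ∀ i j : Fin (n - 1), D i j =
      if (i : ℕ) < h ∧ (j : ℕ) < h then δ ^ 2 - 3
      else if (i : ℕ) < h ∨ (j : ℕ) < h then -(1 + δ ^ 2)
      else 1 - 3 * δ ^ 2)
    (hS : S = (δ ^ 2 - 1)⁻¹ •
      ((2 : ℝ) • M + D - (1 + δ ^ 2) • (1 : Matrix (Fin (n - 1)) (Fin (n - 1)) ℝ))) :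
    S.IsSymm ∧ (∀ i, S i i = 0) ∧ (∀ i j, i ≠ j → S i j = 1 ∨ S i j = -1) := by
  set x : Fin (n - 1) → EuclideanSpace ℝ (Fin d) := fun i => P (Fin.castLE (by omega) i)
  set p := P ⟨n - 1, by omega⟩
  have hlast : ∀ i, dist (x i) p = if (i : ℕ) < h then 1 else δ := by
    intro i
    split_ifs with hi
    exacts [hone i hi, hdel i (not_lt.mp hi)]
  have hD' : ∀ i j, D i j = 1 + δ ^ 2 - 2 * dist (x i) p ^ 2 - 2 * dist (x j) p ^ 2 := by
    intro i j
    rw [hD, hlast, hlast, block_entry_eq]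
  have hx : ∀ i j, i ≠ j → dist (x i) (x j) = 1 ∨ dist (x i) (x j) = δ :=
    fun i j hij => hdist _ _ ((Fin.castLE_injective _).ne hij)
  rw [eq_twoDistanceSeidel x p δ M D S hM hD' hS]
  exact isSeidel_twoDistanceSeidel hδ hx
end

section
/- Let n ≥ 3, let h be an integer with 1 ≤ h ≤ n−2, and let δ > 1. Let D be the (n−1)×(n−1) real matrix with D_{ij} = δ² − 3 if i, j ≤ h, D_{ij} = −(1 + δ²) if exactly one of i, j is ≤ h, and D_{ij} = 1 − 3δ² if i, j > h. Then the characteristic polynomial of D equals X^{n−3}·(X − a₁)·(X − a₂), where a_{1,2} = −2(1 − δ²)h + ((1 − 3δ²)/2)(n − 1) ± √( 2(n−1)h(1 − δ²)(1 + δ²) + (n−1)²((1 − 3δ²)/2)² ), and moreover a₂ < 0 < a₁. -/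
open Polynomial

lemma eval_charpoly' {p : ℕ} (M : Matrix (Fin p) (Fin p) ℝ) (t : ℝ) :
    M.charpoly.eval t = (t • (1 : Matrix (Fin p) (Fin p) ℝ) - M).det := by
  rw [Matrix.charpoly, ← Polynomial.coe_evalRingHom, RingHom.map_det]
  congr 1
  ext i j
  simp [Matrix.charmatrix_apply, Matrix.one_apply, Matrix.diagonal_apply]
  split <;> simp

lemma key' {m k : ℕ} (hm : 1 ≤ m) (hk : 1 ≤ k)
    (U : Matrix (Fin m) (Fin k) ℝ) (V : Matrix (Fin k) (Fin m) ℝ) :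
    (U * V).charpoly * X ^ k = (V * U).charpoly * X ^ m := by
  apply Polynomial.funext
  intro t
  simp only [eval_mul, eval_pow, eval_X, eval_charpoly']
  rcases eq_or_ne t 0 with rfl | ht
  · rw [zero_pow (by omega), zero_pow (by omega), mul_zero, mul_zero]
  · have h1 : t • (1 : Matrix (Fin m) (Fin m) ℝ) - U * V
        = t • ((1 : Matrix (Fin m) (Fin m) ℝ) - (t⁻¹ • U) * V) := by
      rw [smul_sub, Matrix.smul_mul, smul_smul, mul_inv_cancel₀ ht, one_smul]
    have h2 : t • (1 : Matrix (Fin k) (Fin k) ℝ) - V * U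
        = t • ((1 : Matrix (Fin k) (Fin k) ℝ) - V * (t⁻¹ • U)) := by
      rw [smul_sub, Matrix.mul_smul, smul_smul, mul_inv_cancel₀ ht, one_smul]
    rw [h1, h2, Matrix.det_smul, Matrix.det_smul, Matrix.det_one_sub_mul_comm]
    simp [Fintype.card_fin]
    ring

lemma sumif' {m h : ℕ} (hh : h ≤ m) (c d : ℝ) :
    ∑ j : Fin m, (if (j : ℕ) < h then c else d) = h * c + ((m - h : ℕ) : ℝ) * d := by
  rw [Fin.sum_univ_eq_sum_range (fun j => if j < h then c else d), Finset.sum_ite,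
    Finset.sum_const, Finset.sum_const]
  have h1 : (Finset.range m).filter (fun j => j < h) = Finset.range h := by
    ext x; simp; omega
  have h2 : (Finset.range m).filter (fun j => ¬ j < h) = Finset.Ico h m := by
    ext x; simp; omega
  rw [h1, h2]
  simp [Nat.card_Ico, nsmul_eq_mul]

lemma quadfact (p q r s a b : ℝ) (h1 : p + q = a + b) (h2 : p * q - r * s = a * b) :
    (X - C p) * (X - C q) - -C r * -C s = (X - C a) * (X - C b) := by
  have e1 : (X - C p) * (X - C q) - -C r * -C s
      = X ^ 2 - C (p + q) * X + C (p * q - r * s) := by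
    rw [C_add, C_sub, C_mul, C_mul]; ring
  have e2 : (X - C a) * (X - C b) = X ^ 2 - C (a + b) * X + C (a * b) := by
    rw [C_add, C_mul]; ring
  rw [e1, e2, h1, h2]

/-- The characteristic polynomial of the auxiliary block matrix `D`
equals `X^(n-3) (X - a₁)(X - a₂)` with `a₂ < 0 < a₁`. -/
theorem stmt1 (n : ℕ) (hn : 3 ≤ n) (h : ℕ) (hh1 : 1 ≤ h) (hh2 : h ≤ n - 2)
    (δ : ℝ) (hδ : 1 < δ)
    (D : Matrix (Fin (n - 1)) (Fin (n - 1)) ℝ)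
    (hD : ∀ i j : Fin (n - 1), D i j =
      if (i : ℕ) < h ∧ (j : ℕ) < h then δ ^ 2 - 3
      else if (i : ℕ) < h ∨ (j : ℕ) < h then -(1 + δ ^ 2)
      else 1 - 3 * δ ^ 2)
    (a₁ a₂ : ℝ)
    (ha₁ : a₁ = -2 * (1 - δ ^ 2) * (h : ℝ) + (1 - 3 * δ ^ 2) / 2 * ((n : ℝ) - 1)
      + Real.sqrt (2 * ((n : ℝ) - 1) * (h : ℝ) * (1 - δ ^ 2) * (1 + δ ^ 2)
        + ((n : ℝ) - 1) ^ 2 * ((1 - 3 * δ ^ 2) / 2) ^ 2))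
    (ha₂ : a₂ = -2 * (1 - δ ^ 2) * (h : ℝ) + (1 - 3 * δ ^ 2) / 2 * ((n : ℝ) - 1)
      - Real.sqrt (2 * ((n : ℝ) - 1) * (h : ℝ) * (1 - δ ^ 2) * (1 + δ ^ 2)
        + ((n : ℝ) - 1) ^ 2 * ((1 - 3 * δ ^ 2) / 2) ^ 2)) :
    D.charpoly = X ^ (n - 3) * (X - C a₁) * (X - C a₂) ∧ a₂ < 0 ∧ 0 < a₁ := by
  set α : ℝ := δ ^ 2 - 3 with hα
  set β : ℝ := -(1 + δ ^ 2) with hβ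
  set γ : ℝ := 1 - 3 * δ ^ 2 with hγ
  set T : ℝ := -2 * (1 - δ ^ 2) * (h : ℝ) + (1 - 3 * δ ^ 2) / 2 * ((n : ℝ) - 1) with hT
  set R : ℝ := 2 * ((n : ℝ) - 1) * (h : ℝ) * (1 - δ ^ 2) * (1 + δ ^ 2)
      + ((n : ℝ) - 1) ^ 2 * ((1 - 3 * δ ^ 2) / 2) ^ 2 with hRdef
  have hhm : h ≤ n - 1 := by omega
  have hcastmh : ((n - 1 - h : ℕ) : ℝ) = (n : ℝ) - 1 - (h : ℝ) := by
    have h1 : h + 1 ≤ n := by omega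
    have : (n - 1 - h : ℕ) + (1 + h) = n := by omega
    have := congrArg (fun k : ℕ => (k : ℝ)) this
    push_cast at this
    linarith
  have hH1 : (1 : ℝ) ≤ (h : ℝ) := by exact_mod_cast hh1
  have hMH1 : (1 : ℝ) ≤ (n : ℝ) - 1 - (h : ℝ) := by
    have h2 : h + 2 ≤ n := by omega
    have : (h : ℝ) + 2 ≤ (n : ℝ) := by exact_mod_cast h2
    linarith
  have hRid : R = T ^ 2 + 4 * (δ ^ 2 - 1) ^ 2 * (h : ℝ) * ((n : ℝ) - 1 - (h : ℝ)) := by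
    rw [hRdef, hT]; ring
  have hδ1 : 0 < δ ^ 2 - 1 := by nlinarith
  have hδ2 : 0 < (δ ^ 2 - 1) ^ 2 := by positivity
  have hterm : 0 < 4 * (δ ^ 2 - 1) ^ 2 * (h : ℝ) * ((n : ℝ) - 1 - (h : ℝ)) := by
    apply mul_pos (mul_pos (mul_pos (by norm_num) hδ2) (by linarith)) (by linarith)
  have hR0 : 0 ≤ R := by rw [hRid]; nlinarith [sq_nonneg T]
  have hRT : T ^ 2 < R := by rw [hRid]; linarith
  have hsq : Real.sqrt R ^ 2 = R := Real.sq_sqrt hR0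
  have hs0 : 0 ≤ Real.sqrt R := Real.sqrt_nonneg R
  have habs : |T| < Real.sqrt R := by
    rw [← Real.sqrt_sq_eq_abs]; exact Real.sqrt_lt_sqrt (sq_nonneg T) hRT
  have ha1pos : 0 < a₁ := by
    rw [ha₁]; have := neg_abs_le T; linarith
  have ha2neg : a₂ < 0 := by
    rw [ha₂]; have := le_abs_self T; linarith
  -- matrices
  set U : Matrix (Fin (n - 1)) (Fin 2) ℝ :=
    Matrix.of (fun j a => if (j : ℕ) < h then (if a = 0 then 1 else 0)
      else (if a = 0 then 0 else 1)) with hU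
  set V : Matrix (Fin 2) (Fin (n - 1)) ℝ :=
    Matrix.of (fun a j => if (j : ℕ) < h then (if a = 0 then α else β)
      else (if a = 0 then β else γ)) with hV
  have hDUV : D = U * V := by
    ext i j
    rw [hD, Matrix.mul_apply, Fin.sum_univ_two]
    by_cases hi : (i : ℕ) < h <;> by_cases hj : (j : ℕ) < h <;>
      simp [hU, hV, hi, hj]
  have e00 : (V * U) 0 0 = (h : ℝ) * α := by
    rw [Matrix.mul_apply,
      Finset.sum_congr rfl (fun j _ => show V 0 j * U j 0 = if (j : ℕ) < h then α else 0 by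
        by_cases hj : (j : ℕ) < h <;> simp [hU, hV, hj]),
      sumif' hhm]
    simp
  have e01 : (V * U) 0 1 = ((n : ℝ) - 1 - (h : ℝ)) * β := by
    rw [Matrix.mul_apply,
      Finset.sum_congr rfl (fun j _ => show V 0 j * U j 1 = if (j : ℕ) < h then 0 else β by
        by_cases hj : (j : ℕ) < h <;> simp [hU, hV, hj]),
      sumif' hhm, hcastmh]
    simp
  have e10 : (V * U) 1 0 = (h : ℝ) * β := by
    rw [Matrix.mul_apply,
      Finset.sum_congr rfl (fun j _ => show V 1 j * U j 0 = if (j : ℕ) < h then β else 0 by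
        by_cases hj : (j : ℕ) < h <;> simp [hU, hV, hj]),
      sumif' hhm]
    simp
  have e11 : (V * U) 1 1 = ((n : ℝ) - 1 - (h : ℝ)) * γ := by
    rw [Matrix.mul_apply,
      Finset.sum_congr rfl (fun j _ => show V 1 j * U j 1 = if (j : ℕ) < h then 0 else γ by
        by_cases hj : (j : ℕ) < h <;> simp [hU, hV, hj]),
      sumif' hhm, hcastmh]
    simp
  have hsum' : (h : ℝ) * α + ((n : ℝ) - 1 - (h : ℝ)) * γ = a₁ + a₂ := by
    rw [ha₁, ha₂, hα, hγ, hT]; ring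
  have hprod' : (h : ℝ) * α * (((n : ℝ) - 1 - (h : ℝ)) * γ)
      - ((n : ℝ) - 1 - (h : ℝ)) * β * ((h : ℝ) * β) = a₁ * a₂ := by
    have e1 : a₁ * a₂ = T ^ 2 - Real.sqrt R ^ 2 := by rw [ha₁, ha₂]; ring
    rw [e1, hsq, hRid, hα, hβ, hγ]; ring
  have hcp2 : (V * U).charpoly = (X - C a₁) * (X - C a₂) := by
    rw [Matrix.charpoly, Matrix.det_fin_two, Matrix.charmatrix_apply_eq,
      Matrix.charmatrix_apply_eq, Matrix.charmatrix_apply_ne _ _ _ (by decide),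
      Matrix.charmatrix_apply_ne _ _ _ (by decide), e00, e01, e10, e11]
    exact quadfact _ _ _ _ _ _ hsum' hprod'
  have hkey := key' (m := n - 1) (k := 2) (by omega) (by omega) U V
  rw [← hDUV, hcp2] at hkey
  refine ⟨?_, ha2neg, ha1pos⟩
  have hx2 : (X : ℝ[X]) ^ 2 ≠ 0 := pow_ne_zero 2 X_ne_zero
  apply mul_right_cancel₀ hx2
  rw [hkey]
  have hpow : (X : ℝ[X]) ^ (n - 1) = X ^ (n - 3) * X ^ 2 := by
    rw [← pow_add]; congr 1; omega
  rw [hpow]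
  ring
end

section
/- Let d ≥ 1, n ≥ d + 4, and δ > 1. Let P_1, …, P_n be points in ℝ^d whose pairwise distances all lie in {1, δ}, arranged so that for some h with 0 ≤ h ≤ n−1, ‖P_i − P_n‖ = 1 for 1 ≤ i ≤ h and ‖P_i − P_n‖ = δ for h < i ≤ n−1. Let S = (2M + D − (1 + δ²)·I)/(δ² − 1) be the associated (n−1)×(n−1) Seidel matrix, where M_{ij} = ‖P_i − P_n‖² + ‖P_j − P_n‖² − ‖P_i − P_j‖² and D_{ij} equals δ²−3 if i, j ≤ h, equals −(1+δ²) if exactly one of i, j is ≤ h, and equals 1−3δ² if i, j > h. Set c = (1 + δ²)/(1 − δ²). Then (X − c)^{n−d−3} divides the characteristic polynomial of S, and, counting multiplicities, S has at most one eigenvalue strictly less than c. -/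
/-!
Put `v i = P_i - P_n`. Expanding `M` by the polarization identity and `D` through the two
possible values of `‖v i‖²` gives
`S - c • 1 = a • gram v + (w 1ᵀ + 1 wᵀ)` with `a = 4 / (δ² - 1) > 0` and some vector `w`.
The Gram matrix has rank at most `d`, so `S - c • 1` has rank at most `d + 2`, which forces the
eigenvalue `c` to have multiplicity at least `(n - 1) - (d + 2)`. On the hyperplane `1ᗮ` the
rank-two part vanishes as a quadratic form, so `S - c • 1` is positive semidefinite there; a
two-dimensional span of eigenvectors with eigenvalues below `c` would meet that hyperplane.
-/

open Polynomial Matrix Finset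

namespace Matrix

theorem rank_add_le {m n K : Type*} [Fintype n] [Field K] (A B : Matrix m n K) :
    (A + B).rank ≤ A.rank + B.rank := by
  rw [rank, rank, rank, mulVecLin_add]
  exact (Submodule.finrank_mono (LinearMap.range_add_le _ _)).trans
    (Submodule.finrank_add_le_finrank_add_finrank _ _)

theorem rank_smul_le {m n K : Type*} [Fintype n] [Field K] (a : K) (A : Matrix m n K) :
    (a • A).rank ≤ A.rank := by
  rcases eq_or_ne a 0 with rfl | ha
  · simp [rank_zero]
  · exact (rank_smul_of_mem_nonZeroDivisors _ (mem_nonZeroDivisors_of_ne_zero ha)).le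

theorem rank_gram_le {n 𝕜 E : Type*} [Fintype n] [RCLike 𝕜] [NormedAddCommGroup E]
    [InnerProductSpace 𝕜 E] [FiniteDimensional 𝕜 E] (v : n → E) :
    (gram 𝕜 v).rank ≤ Module.finrank 𝕜 E := by
  rw [gram_eq_conjTranspose_mul (stdOrthonormalBasis 𝕜 E)]
  exact (rank_mul_le_right _ _).trans (rank_le_card_height _ |>.trans (by simp))

theorem dotProduct_vecMulVec_mulVec {m n R : Type*} [Fintype m] [Fintype n] [CommSemiring R]
    (x u : m → R) (v y : n → R) : x ⬝ᵥ (vecMulVec u v *ᵥ y) = (x ⬝ᵥ u) * (v ⬝ᵥ y) := by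
  simp [vecMulVec_mulVec, dotProduct_smul, mul_comm]

namespace IsHermitian

variable {n : Type*} [Fintype n] [DecidableEq n] {A : Matrix n n ℝ}

theorem rank_sub_smul_one (hA : A.IsHermitian) (c : ℝ) :
    (A - c • 1).rank = #{i | hA.eigenvalues i ≠ c} := by
  have hconj : A - c • 1 = Unitary.conjStarAlgAut ℝ _ hA.eigenvectorUnitary
      (diagonal (hA.eigenvalues - fun _ => c)) := by
    have hdiag : diagonal (hA.eigenvalues - fun _ => c) =
        diagonal (RCLike.ofReal ∘ hA.eigenvalues) - c • 1 := by
      ext i j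
      by_cases hij : i = j <;> simp [hij]
    conv_lhs => rw [hA.spectral_theorem]
    rw [hdiag, map_sub, map_smul, map_one]
  rw [hconj, Unitary.conjStarAlgAut_apply, ← Unitary.coe_star]
  simp [-isUnit_iff_ne_zero, -Unitary.coe_star, rank_diagonal, Fintype.card_subtype, sub_eq_zero]

theorem pow_dvd_charpoly (hA : A.IsHermitian) (c : ℝ) :
    (X - C c) ^ (Fintype.card n - (A - c • 1).rank) ∣ A.charpoly := by
  have hcard : Fintype.card n - (A - c • 1).rank = #{i | hA.eigenvalues i = c} := by
    rw [hA.rank_sub_smul_one, ← card_univ,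
      ← card_filter_add_card_filter_not (fun i => hA.eigenvalues i = c)]
    simp
  rw [hcard, hA.charpoly_eq, ← prod_filter_mul_prod_filter_not univ (hA.eigenvalues · = c)]
  refine dvd_mul_of_dvd_left (dvd_of_eq ?_) _
  rw [← prod_const]
  exact prod_congr rfl fun i hi => by simp [(mem_filter.mp hi).2]

theorem card_eigenvalues_lt_le_one (hA : A.IsHermitian) {c : ℝ} (y : n → ℝ)
    (hpos : ∀ x, y ⬝ᵥ x = 0 → 0 ≤ x ⬝ᵥ ((A - c • 1) *ᵥ x)) :
    #{i | hA.eigenvalues i < c} ≤ 1 := by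
  by_contra! hlt
  obtain ⟨i, hi, j, hj, hij⟩ := one_lt_card.mp hlt
  simp only [mem_filter, mem_univ, true_and] at hi hj
  set b := hA.eigenvectorBasis
  have hb (k l : n) : ⇑(b k) ⬝ᵥ ⇑(b l) = if k = l then 1 else 0 := by
    rw [← star_trivial (⇑(b k) : n → ℝ), dotProduct_comm,
      ← EuclideanSpace.inner_eq_star_dotProduct, orthonormal_iff_ite.mp b.orthonormal]
  have hAb (k : n) : (A - c • 1) *ᵥ ⇑(b k) = (hA.eigenvalues k - c) • ⇑(b k) := by
    rw [sub_mulVec, hA.mulVec_eigenvectorBasis, smul_mulVec, one_mulVec, sub_smul]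
  obtain ⟨p, q, hpq, hy⟩ :
      ∃ p q : ℝ, (p ≠ 0 ∨ q ≠ 0) ∧ y ⬝ᵥ (p • ⇑(b i) + q • ⇑(b j)) = 0 := by
    by_cases hyi : y ⬝ᵥ ⇑(b i) = 0
    · exact ⟨1, 0, by simp, by simp [hyi]⟩
    · refine ⟨y ⬝ᵥ ⇑(b j), -(y ⬝ᵥ ⇑(b i)), Or.inr (neg_ne_zero.mpr hyi), ?_⟩
      simp only [dotProduct_add, dotProduct_smul, smul_eq_mul]
      ring
  have hform : (p • ⇑(b i) + q • ⇑(b j)) ⬝ᵥ ((A - c • 1) *ᵥ (p • ⇑(b i) + q • ⇑(b j))) =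
      p ^ 2 * (hA.eigenvalues i - c) + q ^ 2 * (hA.eigenvalues j - c) := by
    simp only [mulVec_add, mulVec_smul, hAb, add_dotProduct, dotProduct_add, smul_dotProduct,
      dotProduct_smul, hb, if_neg hij, if_neg (Ne.symm hij), if_true, smul_eq_mul]
    ring
  have hneg : p ^ 2 * (hA.eigenvalues i - c) + q ^ 2 * (hA.eigenvalues j - c) < 0 := by
    rcases hpq with hp | hq
    · nlinarith [sq_pos_of_ne_zero hp, sq_nonneg q]
    · nlinarith [sq_pos_of_ne_zero hq, sq_nonneg p]
  linarith [hpos _ hy]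

theorem card_roots_charpoly_lt_le_one (hA : A.IsHermitian) {c : ℝ} (y : n → ℝ)
    (hpos : ∀ x, y ⬝ᵥ x = 0 → 0 ≤ x ⬝ᵥ ((A - c • 1) *ᵥ x)) :
    Multiset.card (A.charpoly.roots.filter (· < c)) ≤ 1 := by
  rw [hA.roots_charpoly_eq_eigenvalues, Multiset.filter_map]
  simpa [card_def] using hA.card_eigenvalues_lt_le_one y hpos

end IsHermitian

section GramAddVecMulVec

variable {ι E : Type*} [NormedAddCommGroup E] [InnerProductSpace ℝ E]
  (a : ℝ) (v : ι → E) (w : ι → ℝ)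

theorem isHermitian_smul_gram_add_vecMulVec :
    (a • gram ℝ v + (vecMulVec w 1 + vecMulVec 1 w)).IsHermitian :=
  ((isHermitian_gram ℝ v).smul (.all a)).add (by simp [IsHermitian, add_comm])

theorem rank_smul_gram_add_vecMulVec_le [Fintype ι] [FiniteDimensional ℝ E] :
    (a • gram ℝ v + (vecMulVec w 1 + vecMulVec 1 w)).rank ≤ Module.finrank ℝ E + 2 :=
  calc _ ≤ (a • gram ℝ v).rank + ((vecMulVec w 1).rank + (vecMulVec 1 w).rank) :=
        (rank_add_le _ _).trans (by gcongr; exact rank_add_le _ _)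
    _ ≤ Module.finrank ℝ E + (1 + 1) := by
        gcongr
        · exact (rank_smul_le _ _).trans (rank_gram_le v)
        all_goals exact rank_vecMulVec_le _ _

theorem dotProduct_smul_gram_add_vecMulVec_mulVec_nonneg [Fintype ι] (ha : 0 ≤ a) {x : ι → ℝ}
    (hx : 1 ⬝ᵥ x = 0) : 0 ≤ x ⬝ᵥ ((a • gram ℝ v + (vecMulVec w 1 + vecMulVec 1 w)) *ᵥ x) := by
  have hgram := (posSemidef_gram ℝ v).dotProduct_mulVec_nonneg x
  rw [star_trivial] at hgram
  simp only [add_mulVec, smul_mulVec, dotProduct_add, dotProduct_smul, smul_eq_mul,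
    dotProduct_vecMulVec_mulVec, hx, dotProduct_comm x 1, mul_zero, zero_mul, add_zero]
  positivity

end GramAddVecMulVec

end Matrix

theorem dist_sq_add_dist_sq_sub_dist_sq {E : Type*} [NormedAddCommGroup E]
    [InnerProductSpace ℝ E] (x y o : E) :
    dist x o ^ 2 + dist y o ^ 2 - dist x y ^ 2 = 2 * inner ℝ (x - o) (y - o) := by
  rw [dist_eq_norm, dist_eq_norm, dist_eq_norm, ← sub_sub_sub_cancel_right x y o,
    norm_sub_sq_real (x - o)]
  ring

/-- The Seidel matrix `S` of an `n`-point two-distance set in `ℝ^d`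
has eigenvalue `c = (1+δ²)/(1-δ²)` with multiplicity at least `n-d-3`, and at most
one eigenvalue (with multiplicity) strictly below `c`. -/
theorem stmt2 (d n : ℕ) (hn : d + 4 ≤ n) (δ : ℝ) (hδ : 1 < δ)
    (P : Fin n → EuclideanSpace ℝ (Fin d))
    (h : ℕ)
    (hone : ∀ i : Fin (n - 1), (i : ℕ) < h →
      dist (P (Fin.castLE (by omega) i)) (P ⟨n - 1, by omega⟩) = 1)
    (hdel : ∀ i : Fin (n - 1), h ≤ (i : ℕ) →
      dist (P (Fin.castLE (by omega) i)) (P ⟨n - 1, by omega⟩) = δ)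
    (M D S : Matrix (Fin (n - 1)) (Fin (n - 1)) ℝ)
    (hM : ∀ i j : Fin (n - 1), M i j =
      dist (P (Fin.castLE (by omega) i)) (P ⟨n - 1, by omega⟩) ^ 2 +
      dist (P (Fin.castLE (by omega) j)) (P ⟨n - 1, by omega⟩) ^ 2 -
      dist (P (Fin.castLE (by omega) i)) (P (Fin.castLE (by omega) j)) ^ 2)
    (hD : ∀ i j : Fin (n - 1), D i j =
      if (i : ℕ) < h ∧ (j : ℕ) < h then δ ^ 2 - 3
      else if (i : ℕ) < h ∨ (j : ℕ) < h then -(1 + δ ^ 2)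
      else 1 - 3 * δ ^ 2)
    (hS : S = (δ ^ 2 - 1)⁻¹ •
      ((2 : ℝ) • M + D - (1 + δ ^ 2) • (1 : Matrix (Fin (n - 1)) (Fin (n - 1)) ℝ)))
    (c : ℝ) (hc : c = (1 + δ ^ 2) / (1 - δ ^ 2)) :
    (X - C c) ^ (n - d - 3) ∣ S.charpoly ∧
      Multiset.card (S.charpoly.roots.filter (fun x => x < c)) ≤ 1 := by
  set v : Fin (n - 1) → EuclideanSpace ℝ (Fin d) :=
    fun i => P (Fin.castLE (by omega) i) - P ⟨n - 1, by omega⟩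
  have hnorm (i : Fin (n - 1)) : ‖v i‖ ^ 2 = if (i : ℕ) < h then 1 else δ ^ 2 := by
    rw [← dist_eq_norm]
    split_ifs with hi
    · rw [hone i hi, one_pow]
    · rw [hdel i (not_lt.mp hi)]
  set w : Fin (n - 1) → ℝ := fun i => (1 + δ ^ 2) / 2 - 2 * ‖v i‖ ^ 2
  have hM' : M = (2 : ℝ) • gram ℝ v := by
    ext i j
    rw [hM, dist_sq_add_dist_sq_sub_dist_sq]
    rfl
  have hD' : D = vecMulVec w 1 + vecMulVec 1 w := by
    ext i j
    rw [hD, Matrix.add_apply, vecMulVec_apply, vecMulVec_apply]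
    by_cases hi : (i : ℕ) < h <;> by_cases hj : (j : ℕ) < h <;> simp [w, hnorm, hi, hj] <;> ring
  set e := (δ ^ 2 - 1)⁻¹
  have he : 0 < e := inv_pos.mpr (by nlinarith)
  have hshift : S - c • 1 = (4 * e) • gram ℝ v + (vecMulVec (e • w) 1 + vecMulVec 1 (e • w)) := by
    have hc' : c = -(1 + δ ^ 2) * e := by
      rw [hc, ← neg_sub, div_neg, neg_mul, div_eq_mul_inv]
    rw [hS, hM', hD', hc', smul_vecMulVec, vecMulVec_smul]
    module
  have hA : S.IsHermitian := by
    rw [← sub_add_cancel S (c • 1), hshift]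
    exact (isHermitian_smul_gram_add_vecMulVec _ v _).add (isHermitian_one.smul (.all c))
  refine ⟨(pow_dvd_pow _ ?_).trans (hA.pow_dvd_charpoly c),
    hA.card_roots_charpoly_lt_le_one 1 fun x hx => ?_⟩
  · have hrank := rank_smul_gram_add_vecMulVec_le (4 * e) v (e • w)
    rw [← hshift, finrank_euclideanSpace_fin] at hrank
    simp only [Fintype.card_fin]
    omega
  · rw [hshift]
    exact dotProduct_smul_gram_add_vecMulVec_mulVec_nonneg _ v _ (by positivity) hx
end

section
/- Let d ≥ 1 and δ > 1, and set γ = (1 + δ²)/(δ² − 1). Suppose γ² > d + 1. If X is a set of n points in ℝ^d such that the distance between any two distinct points of X is either 1 or δ, then n ≤ (d+1)·(γ² − 1)/(γ² − (d+1)) + 1. -/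
/-!
Normalise the set into the symmetric matrix `T` with entries `γ - 2 ‖p - q‖² / (δ² - 1)`: its
diagonal is `γ` and its off-diagonal entries are `1` (distance `1`) or `-1` (distance `δ`), so
`tr T = n γ` and `tr T² = n (γ² + n - 1)`. Writing `‖p - q‖² = ‖p‖² - 2⟪p, q⟫ + ‖q‖²` shows that
the quadratic form of `T` vanishes on the affine dependencies `y` (`∑ yₚ = 0`, `∑ yₚ p = 0`), a
subspace of codimension at most `d + 1`; hence `T` and `-T` have at most `d + 1` positive
eigenvalues. Cauchy–Schwarz over the positive eigenvalues of `±T` gives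
`(tr T)² ≤ (d + 1) tr T²`, i.e. `n² γ² ≤ (d + 1) n (γ² + n - 1)`, which rearranges to the bound.
-/

open Matrix Finset Module

namespace Matrix.IsHermitian

variable {ι : Type*} [Fintype ι] [DecidableEq ι]

theorem trace_mul_self_eq_sum_sq_eigenvalues {𝕜 : Type*} [RCLike 𝕜] {A : Matrix ι ι 𝕜}
    (hA : A.IsHermitian) : (A * A).trace = ∑ i, (hA.eigenvalues i : 𝕜) ^ 2 := by
  conv_lhs => rw [hA.spectral_theorem]
  rw [← map_mul, Unitary.conjStarAlgAut_apply, trace_mul_cycle,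
    Unitary.coe_star_mul_self, one_mul, diagonal_mul_diagonal, trace_diagonal]
  simp [sq]

theorem card_pos_eigenvalues_le_finrank {A : Matrix ι ι ℝ} (hA : A.IsHermitian)
    {W : Type*} [AddCommGroup W] [Module ℝ W] [FiniteDimensional ℝ W]
    (φ : (ι → ℝ) →ₗ[ℝ] W) (hφ : ∀ y, φ y = 0 → y ⬝ᵥ A *ᵥ y ≤ 0) :
    #{i | 0 < hA.eigenvalues i} ≤ finrank ℝ W := by
  by_contra! hcard
  let P := {i // 0 < hA.eigenvalues i}
  let v : P → EuclideanSpace ℝ ι := fun i => hA.eigenvectorBasis i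
  have hv : Orthonormal ℝ v := hA.eigenvectorBasis.orthonormal.comp _ Subtype.val_injective
  let L : (P → ℝ) →ₗ[ℝ] (ι → ℝ) := Fintype.linearCombination ℝ fun i => ⇑(v i)
  have hker : LinearMap.ker (φ ∘ₗ L) ≠ ⊥ :=
    LinearMap.ker_ne_bot_of_finrank_lt (by simpa [P, Fintype.card_subtype] using hcard)
  obtain ⟨c, hc, hc0⟩ := Submodule.exists_mem_ne_zero_of_ne_bot hker
  have hLc : L c = ⇑(∑ i, c i • v i) := by simp [L, Fintype.linearCombination_apply]
  have hALc : A *ᵥ L c = ⇑(∑ i, (c i * hA.eigenvalues i) • v i) := by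
    simp [L, Fintype.linearCombination_apply, mulVec_sum, mulVec_smul, v,
      hA.mulVec_eigenvectorBasis, smul_smul]
  have hquad : L c ⬝ᵥ A *ᵥ L c = ∑ i, c i ^ 2 * hA.eigenvalues i := by
    rw [hALc, hLc]
    change inner ℝ (∑ i, (c i * hA.eigenvalues i) • v i) (∑ i, c i • v i) = _
    rw [hv.inner_sum]
    exact Finset.sum_congr rfl fun i _ => by rw [conj_trivial]; ring
  have hpos : 0 < ∑ i, c i ^ 2 * hA.eigenvalues i := by
    obtain ⟨i, hi⟩ := Function.ne_iff.mp hc0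
    exact Finset.sum_pos' (fun j _ => mul_nonneg (sq_nonneg _) j.2.le)
      ⟨i, Finset.mem_univ _, mul_pos (sq_pos_of_ne_zero hi) i.2⟩
  linarith [hφ _ hc]

theorem sq_trace_le_finrank_mul_trace_mul_self {A : Matrix ι ι ℝ} (hA : A.IsHermitian)
    {W : Type*} [AddCommGroup W] [Module ℝ W] [FiniteDimensional ℝ W]
    (φ : (ι → ℝ) →ₗ[ℝ] W) (hφ : ∀ y, φ y = 0 → y ⬝ᵥ A *ᵥ y = 0) :
    A.trace ^ 2 ≤ finrank ℝ W * (A * A).trace := by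
  wlog htr : 0 ≤ A.trace generalizing A
  · simpa using this hA.neg (fun y hy => by simp [neg_mulVec, hφ y hy]) (by simp; linarith)
  set μ := hA.eigenvalues
  set s : Finset ι := {i | 0 < μ i}
  have htr_le : A.trace ≤ ∑ i ∈ s, μ i := by
    have hsplit := Finset.sum_filter_add_sum_filter_not univ (0 < μ ·) μ
    have hneg : ∑ i with ¬0 < μ i, μ i ≤ 0 :=
      Finset.sum_nonpos fun i hi => not_lt.mp (Finset.mem_filter.mp hi).2
    rw [hA.trace_eq_sum_eigenvalues]
    simp only [RCLike.ofReal_real_eq_id, id_eq]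
    linarith
  calc A.trace ^ 2 ≤ (∑ i ∈ s, μ i) ^ 2 := pow_le_pow_left₀ htr htr_le 2
    _ ≤ #s * ∑ i ∈ s, μ i ^ 2 := sq_sum_le_card_mul_sum_sq
    _ ≤ finrank ℝ W * ∑ i, μ i ^ 2 := by
      gcongr
      · exact_mod_cast hA.card_pos_eigenvalues_le_finrank φ fun y hy => (hφ y hy).le
      · exact Finset.subset_univ s
    _ = finrank ℝ W * (A * A).trace := by simp [hA.trace_mul_self_eq_sum_sq_eigenvalues, μ]

end Matrix.IsHermitian

theorem Matrix.trace_mul_self_eq_of_diag_of_offDiag {ι : Type*} [Fintype ι] {M : Matrix ι ι ℝ}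
    {a : ℝ} (hdiag : ∀ i, M i i = a) (hoff : ∀ i j, i ≠ j → M i j * M j i = 1) :
    (M * M).trace = Fintype.card ι * (a ^ 2 + Fintype.card ι - 1) := by
  classical
  have hrow : ∀ i, ∑ j, M i j * M j i = Fintype.card ι + (a ^ 2 - 1) := by
    intro i
    have hdev : ∑ j, (M i j * M j i - 1) = a ^ 2 - 1 := by
      rw [Finset.sum_eq_single i (fun j _ hji => by rw [hoff i j hji.symm, sub_self])
        (fun h => absurd (Finset.mem_univ i) h), hdiag, sq]
    rw [← hdev, Finset.sum_sub_distrib]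
    simp
  simp only [trace, diag, mul_apply, hrow, Finset.sum_const, Finset.card_univ, nsmul_eq_mul]
  ring

theorem dotProduct_mulVec_of_sub_mul_dist_sq_eq_zero {ι E : Type*} [Fintype ι]
    [NormedAddCommGroup E] [InnerProductSpace ℝ E] (x : ι → E) (a c : ℝ) {y : ι → ℝ}
    (hy : ∑ i, y i = 0) (hyx : ∑ i, y i • x i = 0) :
    y ⬝ᵥ (of fun i j => a - c * dist (x i) (x j) ^ 2) *ᵥ y = 0 := by
  have hrow : ∀ i, ((of fun i j => a - c * dist (x i) (x j) ^ 2) *ᵥ y) i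
      = -c * ∑ j, y j * ‖x j‖ ^ 2 := by
    intro i
    have hinner : ∑ j, y j * inner ℝ (x i) (x j) = 0 := by
      simp_rw [← real_inner_smul_right, ← inner_sum, hyx, inner_zero_right]
    calc ∑ j, (a - c * dist (x i) (x j) ^ 2) * y j
        = (a - c * ‖x i‖ ^ 2) * ∑ j, y j + 2 * c * ∑ j, y j * inner ℝ (x i) (x j)
            - c * ∑ j, y j * ‖x j‖ ^ 2 := by
          simp only [Finset.mul_sum, ← Finset.sum_add_distrib, ← Finset.sum_sub_distrib]
          refine Finset.sum_congr rfl fun j _ => ?_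
          rw [dist_eq_norm, norm_sub_sq_real]
          ring
      _ = -c * ∑ j, y j * ‖x j‖ ^ 2 := by rw [hy, hinner]; ring
  simp only [dotProduct, hrow, ← Finset.sum_mul, hy, zero_mul]

theorem sq_card_mul_le_finrank_add_one_mul_trace_mul_self {ι E : Type*} [Fintype ι]
    [DecidableEq ι] [NormedAddCommGroup E] [InnerProductSpace ℝ E] [FiniteDimensional ℝ E]
    (x : ι → E) {a c : ℝ} {T : Matrix ι ι ℝ} (hT : ∀ i j, T i j = a - c * dist (x i) (x j) ^ 2) :
    (Fintype.card ι * a) ^ 2 ≤ (finrank ℝ E + 1) * (T * T).trace := by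
  obtain rfl : T = of fun i j => a - c * dist (x i) (x j) ^ 2 := by
    ext i j
    rw [hT, of_apply]
  have hherm : (of fun i j => a - c * dist (x i) (x j) ^ 2).IsHermitian := by
    ext i j
    simp [dist_comm]
  have htrace : (of fun i j => a - c * dist (x i) (x j) ^ 2).trace = Fintype.card ι * a := by
    simp [trace]
  let φ : (ι → ℝ) →ₗ[ℝ] E × ℝ :=
    (Fintype.linearCombination ℝ x).prod (Fintype.linearCombination ℝ fun _ => 1)
  have key := hherm.sq_trace_le_finrank_mul_trace_mul_self φ fun y hy =>
    dotProduct_mulVec_of_sub_mul_dist_sq_eq_zero x a c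
      (by simpa [φ, Fintype.linearCombination_apply] using congrArg Prod.snd hy)
      (by simpa [φ, Fintype.linearCombination_apply] using congrArg Prod.fst hy)
  rwa [htrace, finrank_prod, finrank_self, Nat.cast_add, Nat.cast_one] at key

theorem le_div_of_sq_mul_le {n k g : ℝ} (hn : 0 ≤ n) (hk : 1 ≤ k) (hkg : k < g)
    (h : n ^ 2 * g ≤ k * (n * (g + n - 1))) : n ≤ k * (g - 1) / (g - k) := by
  rw [le_div_iff₀ (sub_pos.mpr hkg)]
  rcases hn.eq_or_lt with rfl | hn
  · nlinarith
  · refine le_of_mul_le_mul_left ?_ hn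
    linear_combination h

theorem sq_div_sub_div_mul_sq_eq_one {δ r : ℝ} (hδ : δ ^ 2 - 1 ≠ 0) (hr : r = 1 ∨ r = δ) :
    ((1 + δ ^ 2) / (δ ^ 2 - 1) - 2 / (δ ^ 2 - 1) * r ^ 2) ^ 2 = 1 := by
  rcases hr with rfl | rfl <;> field_simp <;> ring

theorem stmt3_general (d : ℕ) (δ : ℝ)
    (γ : ℝ) (hγ : γ = (1 + δ ^ 2) / (δ ^ 2 - 1)) (hγ2 : γ ^ 2 > (d : ℝ) + 1)
    (n : ℕ) (X : Finset (EuclideanSpace ℝ (Fin d))) (hcard : X.card = n)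
    (htwo : ∀ p ∈ X, ∀ q ∈ X, p ≠ q → dist p q = 1 ∨ dist p q = δ) :
    (n : ℝ) ≤ ((d : ℝ) + 1) * (γ ^ 2 - 1) / (γ ^ 2 - ((d : ℝ) + 1)) + 1 := by
  have hd : (0 : ℝ) ≤ d := d.cast_nonneg
  have hδ : δ ^ 2 - 1 ≠ 0 := by
    intro h
    rw [h, div_zero] at hγ
    nlinarith
  let T : Matrix X X ℝ := of fun p q => γ - 2 / (δ ^ 2 - 1) * dist p.1 q.1 ^ 2
  have hoff : ∀ p q, p ≠ q → T p q * T q p = 1 := fun p q hpq => by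
    simp only [T, of_apply, dist_comm q.1 p.1, ← sq, hγ]
    exact sq_div_sub_div_mul_sq_eq_one hδ (htwo _ p.2 _ q.2 (Subtype.coe_ne_coe.mpr hpq))
  have key := sq_card_mul_le_finrank_add_one_mul_trace_mul_self
    (Subtype.val : X → EuclideanSpace ℝ (Fin d)) (T := T) fun p q => rfl
  rw [trace_mul_self_eq_of_diag_of_offDiag (a := γ) (by simp [T]) hoff,
    finrank_euclideanSpace_fin, Fintype.card_coe, hcard] at key
  linarith [le_div_of_sq_mul_le n.cast_nonneg (by linarith) hγ2 (by linear_combination key)]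

/-- Theorem A: the relative bound for two-distance sets in `ℝ^d`
with distances `1, δ`, where `γ = (1+δ²)/(δ²-1)` and `γ² > d+1`. -/
theorem stmt3 (d : ℕ) (hd : 1 ≤ d) (δ : ℝ) (hδ : 1 < δ)
    (γ : ℝ) (hγ : γ = (1 + δ ^ 2) / (δ ^ 2 - 1)) (hγ2 : γ ^ 2 > (d : ℝ) + 1)
    (n : ℕ) (X : Finset (EuclideanSpace ℝ (Fin d))) (hcard : X.card = n)
    (htwo : ∀ p ∈ X, ∀ q ∈ X, p ≠ q → dist p q = 1 ∨ dist p q = δ) :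
    (n : ℝ) ≤ ((d : ℝ) + 1) * (γ ^ 2 - 1) / (γ ^ 2 - ((d : ℝ) + 1)) + 1 :=
  stmt3_general d δ γ hγ hγ2 n X hcard htwo
end

section
/- Let d ≥ 1 and δ > 1. If X is a set of n points in ℝ^d such that the distance between any two distinct points of X is either 1 or δ, and both distances 1 and δ occur between points of X, and n > 2d + 4, then (1 + δ²)/(δ² − 1) is an odd positive integer; that is, there exists an odd integer k ≥ 1 with (1 + δ²)/(δ² − 1) = k. -/
/-!
Write `k = δ² / (δ² - 1)`. The matrix `(k - |xᵢ - xⱼ|² / (δ² - 1))ᵢⱼ` is an affine function of the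
squared distances, hence of rank at most `d + 2`; on the other hand it equals `A + k I`, where `A`
is the integer adjacency matrix of the unit-distance graph on `X`. So `-k` is an eigenvalue of the
symmetric integer matrix `A` with multiplicity `m ≥ n - d - 2 > n / 2`. Since the minimal polynomial
of `-k` over `ℚ` is separable, its `m`-th power divides the characteristic polynomial of `A`, so it
has degree `1`: `-k` is a rational algebraic integer, i.e. an integer, and
`(1 + δ²) / (δ² - 1) = 2k - 1` is odd.
-/

open Polynomial Matrix

section minpoly

variable {K L : Type*} [Field K] [PerfectField K] [Field L] [Algebra K L]

theorem minpoly_pow_dvd_of_X_sub_C_pow_dvd_map {α : L} {P : K[X]} (hP : P ≠ 0) {m : ℕ}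
    (h : (X - C α) ^ m ∣ P.map (algebraMap K L)) : minpoly K α ^ m ∣ P := by
  induction m generalizing P with
  | zero => simp
  | succ m ih =>
    have hPL : P.map (algebraMap K L) ≠ 0 := Polynomial.map_ne_zero hP
    have hroot : aeval α P = 0 := by
      rw [aeval_def, ← eval_map]
      exact dvd_iff_isRoot.1 ((dvd_pow_self _ m.succ_ne_zero).trans h)
    have hint : IsIntegral K α := (isAlgebraic_iff_isIntegral).1 ⟨P, hP, hroot⟩
    obtain ⟨Q, rfl⟩ := minpoly.dvd K α hroot
    have hQ : Q ≠ 0 := right_ne_zero_of_mul hP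
    have hsimple : ((minpoly K α).map (algebraMap K L)).rootMultiplicity α ≤ 1 :=
      rootMultiplicity_le_one_of_separable
        (PerfectField.separable_of_irreducible (minpoly.irreducible hint)).map α
    rw [← le_rootMultiplicity_iff hPL, Polynomial.map_mul,
      rootMultiplicity_mul (by rwa [← Polynomial.map_mul])] at h
    rw [pow_succ', mul_dvd_mul_iff_left (minpoly.ne_zero hint)]
    exact ih hQ ((le_rootMultiplicity_iff (Polynomial.map_ne_zero hQ)).1 (by omega))

theorem rootMultiplicity_map_mul_natDegree_minpoly_le {P : K[X]} (hP : P ≠ 0) (α : L) :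
    (P.map (algebraMap K L)).rootMultiplicity α * (minpoly K α).natDegree ≤ P.natDegree := by
  rw [← natDegree_pow]
  exact natDegree_le_of_dvd (minpoly_pow_dvd_of_X_sub_C_pow_dvd_map hP
    (pow_rootMultiplicity_dvd _ _)) hP

end minpoly

theorem Polynomial.Monic.exists_intCast_eq_of_natDegree_lt {L : Type*} [Field L] [CharZero L]
    {P : ℤ[X]} (hP : P.Monic) {α : L}
    (h : P.natDegree < 2 * (P.map (Int.castRingHom L)).rootMultiplicity α) :
    ∃ z : ℤ, (z : L) = α := by
  set PQ : ℚ[X] := P.map (Int.castRingHom ℚ)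
  have hPQ : PQ.Monic := hP.map _
  have hmap : P.map (Int.castRingHom L) = PQ.map (algebraMap ℚ L) := by
    rw [Polynomial.map_map]; congr 1; ext; simp
  have hroot : (P.map (Int.castRingHom L)).IsRoot α := by
    rw [← rootMultiplicity_pos (hP.map _).ne_zero]; omega
  have hintZ : IsIntegral ℤ α := ⟨P, hP, by rwa [← eval_map]⟩
  have hintQ : IsIntegral ℚ α := hintZ.tower_top
  have hdeg := rootMultiplicity_map_mul_natDegree_minpoly_le hPQ.ne_zero α
  rw [← hmap, hP.natDegree_map] at hdeg
  have hdeg1 : (minpoly ℚ α).natDegree = 1 := by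
    have hpos := minpoly.natDegree_pos hintQ
    by_contra hne
    have := Nat.mul_le_mul_left ((P.map (Int.castRingHom L)).rootMultiplicity α)
      (show 2 ≤ (minpoly ℚ α).natDegree by omega)
    omega
  obtain ⟨q, rfl⟩ := minpoly.natDegree_eq_one_iff.1 hdeg1
  obtain ⟨z, rfl⟩ := IsIntegrallyClosed.isIntegral_iff.1
    ((isIntegral_algebraMap_iff (algebraMap ℚ L).injective).1 hintZ)
  exact ⟨z, by simp⟩

theorem Matrix.IsHermitian.rootMultiplicity_zero_charpoly {𝕜 n : Type*} [RCLike 𝕜] [Fintype n]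
    [DecidableEq n] {A : Matrix n n 𝕜} (hA : A.IsHermitian) :
    A.charpoly.rootMultiplicity 0 = Fintype.card n - A.rank := by
  rw [← count_roots, hA.roots_charpoly_eq_eigenvalues, hA.rank_eq_card_non_zero_eigs,
    Fintype.card_subtype_compl, Nat.sub_sub_self (Fintype.card_subtype_le _),
    Multiset.count_map, Fintype.card_subtype]
  simp only [Finset.card_def, Finset.filter_val, Function.comp_apply, RCLike.ofReal_eq_zero,
    eq_comm (a := (0 : 𝕜))]

theorem Matrix.IsSymm.exists_intCast_eq_of_two_mul_rank_lt {n : Type*} [Fintype n] [DecidableEq n]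
    {A : Matrix n n ℤ} (hA : A.IsSymm) (μ : ℝ)
    (h : 2 * (A.map (Int.cast : ℤ → ℝ) - scalar n μ).rank < Fintype.card n) :
    ∃ z : ℤ, (z : ℝ) = μ := by
  have hM : (A.map (Int.cast : ℤ → ℝ) - scalar n μ).IsHermitian :=
    (isHermitian_iff_isSymm.2 (hA.map _)).sub (isHermitian_diagonal _)
  have hmult : (A.charpoly.map (Int.castRingHom ℝ)).rootMultiplicity μ
      = Fintype.card n - (A.map (Int.cast : ℤ → ℝ) - scalar n μ).rank := by
    rw [← charpoly_map, ← hM.rootMultiplicity_zero_charpoly, charpoly_sub_scalar,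
      ← rootMultiplicity_eq_rootMultiplicity]
    rfl
  refine (charpoly_monic A).exists_intCast_eq_of_natDegree_lt ?_
  rw [hmult, charpoly_natDegree_eq_dim]
  omega

theorem rank_affine_sq_dist_le {E ι : Type*} [NormedAddCommGroup E] [InnerProductSpace ℝ E]
    [FiniteDimensional ℝ E] [Fintype ι] (x : ι → E) (a b : ℝ) :
    (of fun i j => a + b * dist (x i) (x j) ^ 2).rank ≤ Module.finrank ℝ E + 2 := by
  let e := stdOrthonormalBasis ℝ E
  let P : Matrix ι (Fin (Module.finrank ℝ E) ⊕ Fin 2) ℝ :=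
    fromCols (of fun i k => -2 * b * e.repr (x i) k) (of fun i => ![a + b * ‖x i‖ ^ 2, b])
  let Q : Matrix (Fin (Module.finrank ℝ E) ⊕ Fin 2) ι ℝ :=
    fromRows (of fun k j => e.repr (x j) k) (of fun t j => ![1, ‖x j‖ ^ 2] t)
  have hPQ : of (fun i j => a + b * dist (x i) (x j) ^ 2) = P * Q := by
    ext i j
    have hinner : inner ℝ (x i) (x j) = ∑ k, e.repr (x i) k * e.repr (x j) k := by
      rw [← e.repr.inner_map_map, PiLp.inner_apply]
      simp [mul_comm]
    rw [fromCols_mul_fromRows, Matrix.add_apply]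
    simp only [mul_apply, of_apply, Fin.sum_univ_two, mul_assoc, ← Finset.mul_sum, ← hinner,
      dist_eq_norm, norm_sub_sq_real, cons_val_zero, cons_val_one, cons_val_fin_one]
    ring
  calc _ = (P * Q).rank := by rw [hPQ]
    _ ≤ P.rank := rank_mul_le_left P Q
    _ ≤ _ := by simpa using rank_le_card_width P

section TwoDistance

variable {α ι : Type*} [PseudoMetricSpace α]

noncomputable def unitDistanceMatrix (x : ι → α) : Matrix ι ι ℤ :=
  of fun i j => if dist (x i) (x j) = 1 then 1 else 0

theorem unitDistanceMatrix_isSymm (x : ι → α) : (unitDistanceMatrix x).IsSymm := by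
  ext i j
  simp [unitDistanceMatrix, dist_comm]

theorem unitDistanceMatrix_map_sub_scalar [Fintype ι] [DecidableEq ι] {x : ι → α} {δ : ℝ}
    (hδ : 1 < δ) (htwo : ∀ i j, i ≠ j → dist (x i) (x j) = 1 ∨ dist (x i) (x j) = δ) :
    (unitDistanceMatrix x).map (Int.cast : ℤ → ℝ) - scalar ι (-(δ ^ 2 / (δ ^ 2 - 1)))
      = of fun i j => δ ^ 2 / (δ ^ 2 - 1) + -(δ ^ 2 - 1)⁻¹ * dist (x i) (x j) ^ 2 := by
  have hδ2 : δ ^ 2 - 1 ≠ 0 := by nlinarith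
  ext i j
  rcases eq_or_ne i j with rfl | hij
  · simp [unitDistanceMatrix]
  simp only [unitDistanceMatrix, Matrix.sub_apply, map_apply, of_apply, scalar_apply,
    diagonal_apply_ne _ hij, sub_zero]
  rcases htwo i j hij with h | h
  · rw [h, if_pos rfl]
    field_simp
    ring
  · rw [h, if_neg hδ.ne']
    field_simp
    ring

end TwoDistance

theorem stmt4_general (d : ℕ) (δ : ℝ) (hδ : 1 < δ)
    (n : ℕ) (X : Finset (EuclideanSpace ℝ (Fin d))) (hcard : X.card = n)
    (htwo : ∀ p ∈ X, ∀ q ∈ X, p ≠ q → dist p q = 1 ∨ dist p q = δ)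
    (hn : 2 * d + 4 < n) :
    ∃ k : ℤ, Odd k ∧ 1 ≤ k ∧ (1 + δ ^ 2) / (δ ^ 2 - 1) = (k : ℝ) := by
  have hδ2 : 0 < δ ^ 2 - 1 := by nlinarith
  let x : X → EuclideanSpace ℝ (Fin d) := Subtype.val
  let k := δ ^ 2 / (δ ^ 2 - 1)
  have hrank : ((unitDistanceMatrix x).map (Int.cast : ℤ → ℝ) - scalar X (-k)).rank ≤ d + 2 := by
    rw [unitDistanceMatrix_map_sub_scalar hδ
      fun i j hij => htwo _ i.2 _ j.2 (Subtype.val_injective.ne hij)]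
    simpa using rank_affine_sq_dist_le x k (-(δ ^ 2 - 1)⁻¹)
  obtain ⟨z, hz⟩ := (unitDistanceMatrix_isSymm x).exists_intCast_eq_of_two_mul_rank_lt (-k)
    (by rw [Fintype.card_coe, hcard]; omega)
  have hk : 1 < k := by rw [lt_div_iff₀ hδ2]; linarith
  have hz1 : z < -1 := by exact_mod_cast hz.trans_lt (neg_lt_neg hk)
  refine ⟨-2 * z - 1, ⟨-z - 1, by ring⟩, by omega, ?_⟩
  have hkδ : k * (δ ^ 2 - 1) = δ ^ 2 := div_mul_cancel₀ _ hδ2.ne'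
  rw [div_eq_iff hδ2.ne', Int.cast_sub, Int.cast_mul, hz]
  linear_combination -2 * hkδ

/-- for a two-distance set in `ℝ^d` with distances `1, δ` in which
both distances occur, if `n > 2d + 4` then `(1+δ²)/(δ²-1)` is an odd positive integer. -/
theorem stmt4 (d : ℕ) (hd : 1 ≤ d) (δ : ℝ) (hδ : 1 < δ)
    (n : ℕ) (X : Finset (EuclideanSpace ℝ (Fin d))) (hcard : X.card = n)
    (htwo : ∀ p ∈ X, ∀ q ∈ X, p ≠ q → dist p q = 1 ∨ dist p q = δ)
    (hocc1 : ∃ p ∈ X, ∃ q ∈ X, dist p q = 1)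
    (hoccδ : ∃ p ∈ X, ∃ q ∈ X, dist p q = δ)
    (hn : 2 * d + 4 < n) :
    ∃ k : ℤ, Odd k ∧ 1 ≤ k ∧ (1 + δ ^ 2) / (δ ^ 2 - 1) = (k : ℝ) :=
  stmt4_general d δ hδ n X hcard htwo hn
end

section
/- Let m ≥ 1 and d ≥ 1 be integers with d < 4m² + 4m, and let δ > 1 satisfy (1 + δ²)/(δ² − 1) > 2m + 1. If X is a set of n points in ℝ^d such that the distance between any two distinct points of X is either 1 or δ, then n ≤ (d+1)·4m(m+1)/(4m² + 4m − d) + 1. -/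
/-!
Centre the points at their centroid. Their Gram matrix `G` has rank at most `d`, so
Cauchy–Schwarz gives `(tr G)² ≤ d ‖G‖²_F`; expanding the moments `S = ∑ dist²` and
`Q = ∑ dist⁴` over all ordered pairs in terms of `G` turns this into `(d + 1) S² ≤ d n² Q`.
For a `{1, δ}`-distance set every squared distance `D` between distinct points satisfies
`(D - 1) (D - δ²) = 0`, so `Q` is an affine function of `S`, and AM–GM gives
`4 δ² n (n - 1) Q ≤ (1 + δ²)² S²`. Together: `4 (d + 1) (n - 1) δ² ≤ d n (1 + δ²)²`.
Since `(1 + δ²)² = (δ² - 1)² + 4 δ²`, the hypothesis on `δ` says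
`(4m² + 4m) (δ² - 1)² < 4 δ²`, and the inequality becomes
`n (4m² + 4m - d) ≤ (d + 1) (4m² + 4m)`.
-/

open Finset

namespace Matrix

variable {κ : Type*} [Fintype κ]

theorem IsSymm.trace_mul_self {W : Matrix κ κ ℝ} (hW : W.IsSymm) :
    trace (W * W) = ∑ k, ∑ l, W k l ^ 2 := by
  simp only [trace, diag, mul_apply, hW.apply, sq]

theorem IsSymm.sq_trace_le_card_mul_trace_mul_self {W : Matrix κ κ ℝ} (hW : W.IsSymm) :
    trace W ^ 2 ≤ Fintype.card κ * trace (W * W) := by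
  calc trace W ^ 2 ≤ Fintype.card κ * ∑ k, W k k ^ 2 := sq_sum_le_card_mul_sum_sq
    _ ≤ Fintype.card κ * trace (W * W) := by
      rw [hW.trace_mul_self]
      gcongr with k
      exact single_le_sum (f := fun l ↦ W k l ^ 2) (fun _ _ ↦ sq_nonneg _) (mem_univ k)

end Matrix

section InnerProductSpace

variable {ι E : Type*} [Fintype ι] [NormedAddCommGroup E] [InnerProductSpace ℝ E]

open Matrix in
theorem sq_sum_norm_sq_le_finrank_mul_sum_sum_inner_sq [FiniteDimensional ℝ E] (q : ι → E) :
    (∑ i, ‖q i‖ ^ 2) ^ 2 ≤ Module.finrank ℝ E * ∑ i, ∑ j, inner ℝ (q i) (q j) ^ 2 := by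
  let M : Matrix (Fin (Module.finrank ℝ E)) ι ℝ :=
    of fun k i ↦ (stdOrthonormalBasis ℝ E).repr (q i) k
  have hG : gram ℝ q = Mᵀ * M := by
    rw [gram_eq_conjTranspose_mul (stdOrthonormalBasis ℝ E),
      conjTranspose_eq_transpose_of_trivial]
  -- Pass from the `ι × ι` Gram matrix `Mᵀ M` to the `d × d` matrix `M Mᵀ`, where the
  -- Cauchy–Schwarz inequality only costs a factor `d`.
  have htrace : ∑ i, ‖q i‖ ^ 2 = trace (M * Mᵀ) := by
    rw [trace_mul_comm, ← hG]
    simp [trace]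
  have hsymm : (gram ℝ q).IsSymm := ext fun i j ↦ real_inner_comm (q i) (q j)
  have htrace_sq : ∑ i, ∑ j, inner ℝ (q i) (q j) ^ 2 = trace (M * Mᵀ * (M * Mᵀ)) := by
    simp only [← gram_apply (𝕜 := ℝ), ← hsymm.trace_mul_self]
    rw [hG, Matrix.mul_assoc, trace_mul_comm]
    simp only [Matrix.mul_assoc]
  have hW : (M * Mᵀ).IsSymm := by simp [IsSymm, transpose_mul]
  rw [htrace, htrace_sq]
  simpa using hW.sq_trace_le_card_mul_trace_mul_self

theorem sum_inner_eq_zero_of_sum_eq_zero {q : ι → E} (hq : ∑ i, q i = 0) (i : ι) :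
    ∑ j, inner ℝ (q i) (q j) = 0 := by
  rw [← inner_sum, hq, inner_zero_right]

theorem sum_sum_norm_sub_sq_of_sum_eq_zero {q : ι → E} (hq : ∑ i, q i = 0) :
    ∑ i, ∑ j, ‖q i - q j‖ ^ 2 = 2 * Fintype.card ι * ∑ i, ‖q i‖ ^ 2 := by
  simp only [norm_sub_sq_real, sum_add_distrib, sum_sub_distrib, sum_const, card_univ,
    nsmul_eq_mul]
  simp only [← mul_sum, sum_inner_eq_zero_of_sum_eq_zero hq, sum_const_zero]
  ring

theorem sum_sum_norm_sub_pow_four_of_sum_eq_zero {q : ι → E} (hq : ∑ i, q i = 0) :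
    ∑ i, ∑ j, ‖q i - q j‖ ^ 4 = 2 * Fintype.card ι * ∑ i, ‖q i‖ ^ 4
      + 2 * (∑ i, ‖q i‖ ^ 2) ^ 2 + 4 * ∑ i, ∑ j, inner ℝ (q i) (q j) ^ 2 := by
  have hcol : ∑ i, ∑ j, ‖q j‖ ^ 2 * inner ℝ (q i) (q j) = 0 := by
    rw [sum_comm]
    simp only [← mul_sum, ← sum_inner, hq, inner_zero_left, mul_zero, sum_const_zero]
  calc ∑ i, ∑ j, ‖q i - q j‖ ^ 4
      = ∑ i, ∑ j, (‖q i‖ ^ 4 + ‖q j‖ ^ 4 + 2 * (‖q i‖ ^ 2 * ‖q j‖ ^ 2)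
          + 4 * inner ℝ (q i) (q j) ^ 2 - 4 * (‖q i‖ ^ 2 * inner ℝ (q i) (q j))
          - 4 * (‖q j‖ ^ 2 * inner ℝ (q i) (q j))) := by
        congr! 2 with i - j -
        rw [show ‖q i - q j‖ ^ 4 = (‖q i - q j‖ ^ 2) ^ 2 by ring, norm_sub_sq_real]
        ring
    _ = _ := by
        simp only [sum_add_distrib, sum_sub_distrib, ← mul_sum,
          sum_inner_eq_zero_of_sum_eq_zero hq, hcol, sum_const, card_univ, nsmul_eq_mul,
          ← sum_mul]
        ring

theorem exists_sum_sub_eq_zero [Nonempty ι] (p : ι → E) : ∃ c : E, ∑ i, (p i - c) = 0 := by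
  refine ⟨(Fintype.card ι : ℝ)⁻¹ • ∑ i, p i, ?_⟩
  rw [sum_sub_distrib, sum_const, card_univ, ← Nat.cast_smul_eq_nsmul ℝ, smul_smul,
    mul_inv_cancel₀ (Nat.cast_ne_zero.mpr Fintype.card_ne_zero), one_smul, sub_self]

theorem finrank_add_one_mul_sq_sum_sum_dist_sq_le [FiniteDimensional ℝ E] (p : ι → E) :
    (Module.finrank ℝ E + 1) * (∑ i, ∑ j, dist (p i) (p j) ^ 2) ^ 2
      ≤ Module.finrank ℝ E * Fintype.card ι ^ 2 * ∑ i, ∑ j, dist (p i) (p j) ^ 4 := by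
  cases isEmpty_or_nonempty ι
  · simp
  obtain ⟨c, hc⟩ := exists_sum_sub_eq_zero p
  have hdist : ∀ i j, dist (p i) (p j) = ‖(p i - c) - (p j - c)‖ := fun i j ↦ by
    rw [dist_eq_norm, sub_sub_sub_cancel_right]
  simp only [hdist, sum_sum_norm_sub_sq_of_sum_eq_zero hc,
    sum_sum_norm_sub_pow_four_of_sum_eq_zero hc]
  have hgram := sq_sum_norm_sq_le_finrank_mul_sum_sum_inner_sq (fun i ↦ p i - c)
  have hcs : (∑ i, ‖p i - c‖ ^ 2) ^ 2 ≤ Fintype.card ι * ∑ i, ‖p i - c‖ ^ 4 := by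
    calc (∑ i, ‖p i - c‖ ^ 2) ^ 2 ≤ Fintype.card ι * ∑ i, (‖p i - c‖ ^ 2) ^ 2 := by
          simpa using sq_sum_le_card_mul_sum_sq (s := univ) (f := fun i ↦ ‖p i - c‖ ^ 2)
      _ = Fintype.card ι * ∑ i, ‖p i - c‖ ^ 4 := by simp_rw [← pow_mul]
  have hd : (0 : ℝ) ≤ Module.finrank ℝ E := Nat.cast_nonneg _
  nlinarith [mul_le_mul_of_nonneg_left hcs (mul_nonneg hd (sq_nonneg (Fintype.card ι : ℝ))),
    mul_le_mul_of_nonneg_left hgram (sq_nonneg (Fintype.card ι : ℝ))]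

end InnerProductSpace

section TwoDistance

variable {ι α E : Type*} [Fintype ι] {δ : ℝ}

theorem sum_sum_dist_pow_four_eq_of_two_distance [PseudoMetricSpace α] {p : ι → α}
    (hp : ∀ i j, i ≠ j → dist (p i) (p j) = 1 ∨ dist (p i) (p j) = δ) :
    ∑ i, ∑ j, dist (p i) (p j) ^ 4 = (1 + δ ^ 2) * ∑ i, ∑ j, dist (p i) (p j) ^ 2
      - δ ^ 2 * (Fintype.card ι ^ 2 - Fintype.card ι) := by
  classical
  have hpoint : ∀ i j, dist (p i) (p j) ^ 4
      = (1 + δ ^ 2) * dist (p i) (p j) ^ 2 - δ ^ 2 + δ ^ 2 * if i = j then 1 else 0 := by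
    intro i j
    by_cases hij : i = j
    · simp [hij]
    · rcases hp i j hij with h | h <;> rw [h, if_neg hij] <;> ring
  simp only [hpoint, sum_add_distrib, sum_sub_distrib, ← mul_sum, sum_ite_eq, sum_const,
    card_univ, nsmul_eq_mul, mem_univ, if_true]
  ring

theorem sum_sum_dist_sq_pos_of_two_distance [PseudoMetricSpace α] {p : ι → α} (hδ : 0 < δ)
    (hp : ∀ i j, i ≠ j → dist (p i) (p j) = 1 ∨ dist (p i) (p j) = δ)
    (hcard : 1 < Fintype.card ι) : 0 < ∑ i, ∑ j, dist (p i) (p j) ^ 2 := by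
  obtain ⟨i, j, hij⟩ := Fintype.exists_pair_of_one_lt_card hcard
  have hpos : 0 < dist (p i) (p j) ^ 2 := by
    rcases hp i j hij with h | h <;> rw [h] <;> positivity
  refine sum_pos' (fun _ _ ↦ sum_nonneg fun _ _ ↦ sq_nonneg _) ⟨i, mem_univ i, ?_⟩
  exact sum_pos' (fun _ _ ↦ sq_nonneg _) ⟨j, mem_univ j, hpos⟩

variable [NormedAddCommGroup E] [InnerProductSpace ℝ E] [FiniteDimensional ℝ E]

theorem finrank_add_one_mul_card_sub_one_mul_le_of_two_distance {p : ι → E} (hδ : 0 < δ)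
    (hp : ∀ i j, i ≠ j → dist (p i) (p j) = 1 ∨ dist (p i) (p j) = δ) :
    ((Module.finrank ℝ E : ℝ) + 1) * (Fintype.card ι - 1) * (4 * δ ^ 2)
      ≤ Module.finrank ℝ E * Fintype.card ι * (1 + δ ^ 2) ^ 2 := by
  have hd : (0 : ℝ) ≤ Module.finrank ℝ E := Nat.cast_nonneg _
  rcases le_or_gt (Fintype.card ι) 1 with hcard | hcard
  · have hn : (Fintype.card ι : ℝ) ≤ 1 := by exact_mod_cast hcard
    have : ((Module.finrank ℝ E : ℝ) + 1) * (Fintype.card ι - 1) * (4 * δ ^ 2) ≤ 0 :=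
      mul_nonpos_of_nonpos_of_nonneg
        (mul_nonpos_of_nonneg_of_nonpos (by positivity) (by linarith)) (by positivity)
    exact this.trans (by positivity)
  have hn : (1 : ℝ) < Fintype.card ι := by exact_mod_cast hcard
  have hS := sum_sum_dist_sq_pos_of_two_distance hδ hp hcard
  have hQ := sum_sum_dist_pow_four_eq_of_two_distance hp
  set d : ℝ := (Module.finrank ℝ E : ℝ)
  set n : ℝ := (Fintype.card ι : ℝ)
  set S := ∑ i, ∑ j, dist (p i) (p j) ^ 2
  set Q := ∑ i, ∑ j, dist (p i) (p j) ^ 4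
  have hN : 0 < n ^ 2 - n := by nlinarith
  have hmoment : (d + 1) * S ^ 2 ≤ d * n ^ 2 * Q := finrank_add_one_mul_sq_sum_sum_dist_sq_le p
  have hQS : 4 * δ ^ 2 * (n ^ 2 - n) * Q ≤ (1 + δ ^ 2) ^ 2 * S ^ 2 := by
    rw [hQ]
    nlinarith [sq_nonneg ((1 + δ ^ 2) * S - 2 * δ ^ 2 * (n ^ 2 - n))]
  have hprod : (d + 1) * (n - 1) * (4 * δ ^ 2) * (n * S ^ 2)
      ≤ d * n * (1 + δ ^ 2) ^ 2 * (n * S ^ 2) := by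
    calc (d + 1) * (n - 1) * (4 * δ ^ 2) * (n * S ^ 2)
        = (d + 1) * S ^ 2 * (4 * δ ^ 2 * (n ^ 2 - n)) := by ring
      _ ≤ d * n ^ 2 * Q * (4 * δ ^ 2 * (n ^ 2 - n)) := by gcongr
      _ = d * n ^ 2 * (4 * δ ^ 2 * (n ^ 2 - n) * Q) := by ring
      _ ≤ d * n ^ 2 * ((1 + δ ^ 2) ^ 2 * S ^ 2) := by gcongr
      _ = d * n * (1 + δ ^ 2) ^ 2 * (n * S ^ 2) := by ring
  exact le_of_mul_le_mul_right hprod (by positivity)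

theorem card_mul_sub_finrank_le_of_two_distance {p : ι → E} (hδ : 0 < δ)
    (hp : ∀ i j, i ≠ j → dist (p i) (p j) = 1 ∨ dist (p i) (p j) = δ) {c : ℝ} (hc : 0 ≤ c)
    (hcδ : c * (δ ^ 2 - 1) ^ 2 ≤ 4 * δ ^ 2) :
    Fintype.card ι * (c - Module.finrank ℝ E) ≤ c * (Module.finrank ℝ E + 1) := by
  have hkey := finrank_add_one_mul_card_sub_one_mul_le_of_two_distance hδ hp
  set d : ℝ := (Module.finrank ℝ E : ℝ)
  set n : ℝ := (Fintype.card ι : ℝ)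
  have hdn : 0 ≤ d * n := by positivity
  have h : 4 * δ ^ 2 * (c * (d + 1) * (n - 1)) ≤ 4 * δ ^ 2 * (d * n * (1 + c)) := by
    nlinarith [mul_le_mul_of_nonneg_left hkey hc, mul_le_mul_of_nonneg_left hcδ hdn]
  linarith [le_of_mul_le_mul_left h (by positivity)]

end TwoDistance

theorem sq_sub_one_mul_sq_sub_one_sq_lt {t δ : ℝ} (ht : 0 ≤ t) (hδ : 1 < δ)
    (h : t < (1 + δ ^ 2) / (δ ^ 2 - 1)) : (t ^ 2 - 1) * (δ ^ 2 - 1) ^ 2 < 4 * δ ^ 2 := by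
  have hδ' : 0 < δ ^ 2 - 1 := by nlinarith
  have hlt : t * (δ ^ 2 - 1) < 1 + δ ^ 2 := (lt_div_iff₀ hδ').mp h
  have hsq : (t * (δ ^ 2 - 1)) ^ 2 < (1 + δ ^ 2) ^ 2 :=
    pow_lt_pow_left₀ hlt (by positivity) two_ne_zero
  nlinarith

theorem stmt5_general (m d : ℕ) (hdm : d < 4 * m ^ 2 + 4 * m)
    (δ : ℝ) (hδ : 1 < δ)
    (hγ : (1 + δ ^ 2) / (δ ^ 2 - 1) > 2 * (m : ℝ) + 1)
    (n : ℕ) (X : Finset (EuclideanSpace ℝ (Fin d))) (hcard : X.card = n)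
    (htwo : ∀ p ∈ X, ∀ q ∈ X, p ≠ q → dist p q = 1 ∨ dist p q = δ) :
    (n : ℝ) ≤ ((d : ℝ) + 1) * (4 * (m : ℝ) * ((m : ℝ) + 1)) /
      (4 * (m : ℝ) ^ 2 + 4 * (m : ℝ) - (d : ℝ)) + 1 := by
  have hcδ : (4 * (m : ℝ) ^ 2 + 4 * m) * (δ ^ 2 - 1) ^ 2 < 4 * δ ^ 2 := by
    convert sq_sub_one_mul_sq_sub_one_sq_lt (by positivity) hδ hγ using 2
    ring
  have hbound := card_mul_sub_finrank_le_of_two_distance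
    (p := ((↑) : X → EuclideanSpace ℝ (Fin d))) (by linarith)
    (fun i j hij ↦ htwo _ i.2 _ j.2 (Subtype.coe_injective.ne hij)) (by positivity) hcδ.le
  rw [finrank_euclideanSpace_fin, Fintype.card_coe, hcard] at hbound
  have hdm' : (d : ℝ) < 4 * (m : ℝ) ^ 2 + 4 * m := by exact_mod_cast hdm
  have hn : (n : ℝ) ≤ ((d : ℝ) + 1) * (4 * (m : ℝ) * ((m : ℝ) + 1)) /
      (4 * (m : ℝ) ^ 2 + 4 * (m : ℝ) - (d : ℝ)) := by
    rw [le_div_iff₀ (by linarith)]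
    linarith
  linarith

/-- for a two-distance set in `ℝ^d` with distances `1, δ` and
`(1+δ²)/(δ²-1) > 2m+1`, `d < 4m²+4m`, one has `n ≤ (d+1)·4m(m+1)/(4m²+4m−d) + 1`. -/
theorem stmt5 (m d : ℕ) (hm : 1 ≤ m) (hd : 1 ≤ d) (hdm : d < 4 * m ^ 2 + 4 * m)
    (δ : ℝ) (hδ : 1 < δ)
    (hγ : (1 + δ ^ 2) / (δ ^ 2 - 1) > 2 * (m : ℝ) + 1)
    (n : ℕ) (X : Finset (EuclideanSpace ℝ (Fin d))) (hcard : X.card = n)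
    (htwo : ∀ p ∈ X, ∀ q ∈ X, p ≠ q → dist p q = 1 ∨ dist p q = δ) :
    (n : ℝ) ≤ ((d : ℝ) + 1) * (4 * (m : ℝ) * ((m : ℝ) + 1)) /
      (4 * (m : ℝ) ^ 2 + 4 * (m : ℝ) - (d : ℝ)) + 1 :=
  stmt5_general m d hdm δ hδ hγ n X hcard htwo
end

section
/- Let −1 ≤ a < b < 1 with a + b < 0, let d ≥ 1, n > d, and let v_1, …, v_n be unit vectors in ℝ^d such that ⟨v_i, v_j⟩ ∈ {a, b} for all i ≠ j. Let S = (2G − (a+b)·J + (a+b−2)·I)/(b − a), where G is the Gram matrix of the v_i and J is the all-ones matrix. Set c = (a + b − 2)/(b − a). Then (X − c)^{n−d−1} divides the characteristic polynomial of S, and every eigenvalue μ of S (i.e., every real μ admitting a nonzero vector v with S v = μ v) satisfies μ ≥ c. -/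
/-!
Put `lift i = (√(2/(b-a)) • v i, √(-(a+b)/(b-a)))` in `ℝ^d × ℝ` with the `L²` inner product
(this is where `a + b < 0` enters). Then `S - c • 1` is the Gram matrix of the `lift i`, so it is
positive semidefinite, which gives `c ≤ μ`, and has rank at most `d + 1`, so the `c`-eigenspace
of `S` has dimension at least `n - d - 1`; geometric multiplicity is bounded by algebraic
multiplicity.
-/

open Polynomial Matrix Module

theorem Matrix.X_sub_C_pow_card_sub_rank_dvd_charpoly {K n : Type*} [Field K] [Fintype n]
    [DecidableEq n] (A : Matrix n n K) (μ : K) :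
    (X - C μ) ^ (Fintype.card n - (A - μ • 1).rank) ∣ A.charpoly := by
  rw [← le_rootMultiplicity_iff A.charpoly_monic.ne_zero, ← A.charpoly_toLin']
  have hker : End.eigenspace (toLin' A) μ = LinearMap.ker (A - μ • 1).mulVecLin := by
    rw [End.eigenspace_def, ← Matrix.toLin'_apply', map_sub, map_smul, toLin'_one]
    rfl
  have hrank_nullity := LinearMap.finrank_range_add_finrank_ker (A - μ • 1).mulVecLin
  rw [finrank_fintype_fun_eq_card] at hrank_nullity
  have hgeom := LinearMap.finrank_eigenspace_le (toLin' A) μ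
  rw [hker] at hgeom
  unfold Matrix.rank
  omega

theorem Matrix.rank_gram_le_s9 {𝕜 E ι : Type*} [RCLike 𝕜] [NormedAddCommGroup E]
    [InnerProductSpace 𝕜 E] [FiniteDimensional 𝕜 E] [Fintype ι] (v : ι → E) :
    (gram 𝕜 v).rank ≤ finrank 𝕜 E := by
  have hfactor : (gram 𝕜 v).mulVecLin =
      (LinearMap.pi fun i => innerₛₗ 𝕜 (v i)) ∘ₗ Fintype.linearCombination 𝕜 v := by
    ext x i
    simp [mulVec, dotProduct, Fintype.linearCombination_apply, mul_comm]
  calc (gram 𝕜 v).rank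
      ≤ finrank 𝕜 (LinearMap.range (LinearMap.pi fun i => innerₛₗ 𝕜 (v i))) := by
        rw [Matrix.rank, hfactor]
        exact Submodule.finrank_mono (LinearMap.range_comp_le_range _ _)
    _ ≤ finrank 𝕜 E := LinearMap.finrank_range_le _

theorem Matrix.PosSemidef.nonneg_of_mulVec_eq_smul {R n : Type*} [Fintype n] [Field R]
    [LinearOrder R] [IsOrderedRing R] [StarRing R] [StarOrderedRing R]
    {A : Matrix n n R} (hA : A.PosSemidef) {μ : R} {w : n → R} (hw : w ≠ 0)
    (h : A *ᵥ w = μ • w) : 0 ≤ μ := by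
  have hquad := hA.dotProduct_mulVec_nonneg w
  rw [h, dotProduct_smul, smul_eq_mul] at hquad
  exact nonneg_of_mul_nonneg_left hquad (dotProduct_star_self_pos_iff.2 hw)

theorem Matrix.gram_toLp_sqrt_smul_prod_sqrt {E ι : Type*} [NormedAddCommGroup E]
    [InnerProductSpace ℝ E] (v : ι → E) {s t : ℝ} (hs : 0 ≤ s) (ht : 0 ≤ t) :
    gram ℝ (fun i => WithLp.toLp 2 (√s • v i, √t)) = s • gram ℝ v + t • of fun _ _ => 1 := by
  ext i j
  simp only [gram_apply, WithLp.prod_inner_apply, real_inner_smul_left, real_inner_smul_right,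
    Matrix.add_apply, Matrix.smul_apply, of_apply, smul_eq_mul, RCLike.inner_apply,
    conj_trivial]
  rw [← mul_assoc, Real.mul_self_sqrt hs, Real.mul_self_sqrt ht, mul_one]

theorem stmt9_general (d n : ℕ)
    (a b : ℝ) (hab : a < b) (hsum : a + b < 0)
    (v : Fin n → EuclideanSpace ℝ (Fin d))
    (G J S : Matrix (Fin n) (Fin n) ℝ)
    (hG : ∀ i j, G i j = (inner ℝ (v i) (v j) : ℝ))
    (hJ : ∀ i j, J i j = 1)
    (hS : S = (b - a)⁻¹ •
      ((2 : ℝ) • G - (a + b) • J + (a + b - 2) • (1 : Matrix (Fin n) (Fin n) ℝ)))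
    (c : ℝ) (hc : c = (a + b - 2) / (b - a)) :
    (X - C c) ^ (n - d - 1) ∣ S.charpoly ∧
      ∀ (μ : ℝ) (w : Fin n → ℝ), w ≠ 0 → S.mulVec w = μ • w → c ≤ μ := by
  have hba : 0 < b - a := sub_pos.2 hab
  set lift : Fin n → WithLp 2 (EuclideanSpace ℝ (Fin d) × ℝ) := fun i =>
    WithLp.toLp 2 (√(2 / (b - a)) • v i, √(-(a + b) / (b - a)))
  have hgram : S - c • 1 = gram ℝ lift := by
    rw [gram_toLp_sqrt_smul_prod_sqrt v (by positivity) (div_nonneg (by linarith) hba.le),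
      ← (Matrix.ext hG : G = gram ℝ v), ← (Matrix.ext hJ : J = of fun _ _ => 1), hS, hc]
    module
  have hrank : (S - c • 1).rank ≤ d + 1 := by
    rw [hgram]
    refine (rank_gram_le_s9 lift).trans ?_
    simp [(WithLp.linearEquiv 2 ℝ (EuclideanSpace ℝ (Fin d) × ℝ)).finrank_eq]
  refine ⟨?_, fun μ w hw hSw => ?_⟩
  · refine dvd_trans (pow_dvd_pow _ ?_) (S.X_sub_C_pow_card_sub_rank_dvd_charpoly c)
    rw [Fintype.card_fin]
    omega
  · have heig : (S - c • 1) *ᵥ w = (μ - c) • w := by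
      rw [sub_mulVec, hSw, smul_mulVec, one_mulVec, sub_smul]
    exact sub_nonneg.1 <| (hgram ▸ posSemidef_gram ℝ lift).nonneg_of_mulVec_eq_smul hw heig

/-- for a spherical two-distance set with `a + b < 0`, the Seidel
matrix `S` has eigenvalue `c = (a+b−2)/(b−a)` with multiplicity at least `n−d−1`,
and `c` is its smallest eigenvalue. -/
theorem stmt9 (d n : ℕ) (hd : 1 ≤ d) (hn : d < n)
    (a b : ℝ) (ha : -1 ≤ a) (hab : a < b) (hb : b < 1) (hsum : a + b < 0)
    (v : Fin n → EuclideanSpace ℝ (Fin d))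
    (hunit : ∀ i, ‖v i‖ = 1)
    (hinner : ∀ i j, i ≠ j →
      (inner ℝ (v i) (v j) : ℝ) = a ∨ (inner ℝ (v i) (v j) : ℝ) = b)
    (G J S : Matrix (Fin n) (Fin n) ℝ)
    (hG : ∀ i j, G i j = (inner ℝ (v i) (v j) : ℝ))
    (hJ : ∀ i j, J i j = 1)
    (hS : S = (b - a)⁻¹ •
      ((2 : ℝ) • G - (a + b) • J + (a + b - 2) • (1 : Matrix (Fin n) (Fin n) ℝ)))
    (c : ℝ) (hc : c = (a + b - 2) / (b - a)) :
    (X - C c) ^ (n - d - 1) ∣ S.charpoly ∧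
      ∀ (μ : ℝ) (w : Fin n → ℝ), w ≠ 0 → S.mulVec w = μ • w → c ≤ μ :=
  stmt9_general d n a b hab hsum v G J S hG hJ hS c hc
end

section
/- Let −1 ≤ a < b < 1 with a + b ≥ 0, and let v_1, …, v_n be unit vectors in ℝ^d such that ⟨v_i, v_j⟩ ∈ {a, b} for all i ≠ j, with both values a and b occurring as inner products. If n > 2d + 2, then (2 − a − b)/(b − a) is an odd positive integer; that is, there exists an odd integer k ≥ 1 with (2 − a − b)/(b − a) = k. -/
/-!
Let `A` be the 0/1 matrix of the pairs at inner product `a`. Expanding the Gram matrix gives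
`G = (1 - b) I + b J + (a - b) A`, so every `x` with `∑ xᵢ vᵢ = 0` and `∑ xᵢ = 0` satisfies
`A x = λ x` with `λ = (1 - b) / (b - a)`. These `x` form a subspace of dimension at least
`n - d - 1 > n / 2`, so the eigenvalue `λ` of the integer matrix `A` has multiplicity more than
half the degree `n` of its characteristic polynomial `p`. As the minimal polynomial of `λ` over `ℚ`
is separable, its `m`-th power divides `p` whenever `(X - λ)^m` does, so it has degree one: `λ` is
rational, and being a root of the monic integer polynomial `p` it is an integer. Finally
`(2 - a - b) / (b - a) = 2λ + 1` with `λ > 0`.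
-/

open Polynomial Module Matrix
open scoped InnerProductSpace

section MinpolyMultiplicity

variable {K L : Type*} [Field K] [PerfectField K] [Field L] [Algebra K L]

theorem minpoly_pow_dvd_of_le_rootMultiplicity {x : L} {p : K[X]} (hp : p ≠ 0) {m : ℕ}
    (hm : m ≤ (p.map (algebraMap K L)).rootMultiplicity x) : minpoly K x ^ m ∣ p := by
  induction m generalizing p with
  | zero => simp
  | succ m ih =>
    have hpL : p.map (algebraMap K L) ≠ 0 := map_ne_zero hp
    have hroot : aeval x p = 0 := by
      rw [aeval_def, ← eval_map, ← IsRoot, ← rootMultiplicity_pos hpL]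
      omega
    obtain ⟨q, rfl⟩ := minpoly.dvd K x hroot
    have hint : IsIntegral K x := IsAlgebraic.isIntegral ⟨_, hp, hroot⟩
    have hsimple : ((minpoly K x).map (algebraMap K L)).rootMultiplicity x ≤ 1 :=
      rootMultiplicity_le_one_of_separable
        (PerfectField.separable_of_irreducible (minpoly.irreducible hint)).map x
    rw [Polynomial.map_mul, rootMultiplicity_mul (by rwa [← Polynomial.map_mul])] at hm
    rw [pow_succ']
    exact mul_dvd_mul_left _ (ih (right_ne_zero_of_mul hp) (by omega))

theorem mem_range_algebraMap_of_natDegree_lt_two_mul_rootMultiplicity {x : L} {p : K[X]}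
    (hp : p ≠ 0) (hdeg : p.natDegree < 2 * (p.map (algebraMap K L)).rootMultiplicity x) :
    x ∈ (algebraMap K L).range := by
  set m := (p.map (algebraMap K L)).rootMultiplicity x
  have hdvd : minpoly K x ^ m ∣ p := minpoly_pow_dvd_of_le_rootMultiplicity hp le_rfl
  have hm : m ≠ 0 := by omega
  have hint : IsIntegral K x := by
    by_contra h
    rw [minpoly.eq_zero h, zero_pow hm, zero_dvd_iff] at hdvd
    exact hp hdvd
  have hle : m * (minpoly K x).natDegree ≤ p.natDegree := by
    simpa using natDegree_le_of_dvd hdvd hp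
  have hpos := minpoly.natDegree_pos hint
  rw [← minpoly.natDegree_eq_one_iff]
  by_contra h
  have : m * 2 ≤ m * (minpoly K x).natDegree := Nat.mul_le_mul_left m (by omega)
  omega

end MinpolyMultiplicity

theorem Polynomial.Monic.exists_intCast_eq_of_natDegree_lt_two_mul_rootMultiplicity
    {L : Type*} [Field L] [CharZero L] {p : ℤ[X]} (hp : p.Monic) {x : L}
    (hdeg : p.natDegree < 2 * (p.map (algebraMap ℤ L)).rootMultiplicity x) :
    ∃ z : ℤ, (z : L) = x := by
  have hmap : (p.map (algebraMap ℤ ℚ)).map (algebraMap ℚ L) = p.map (algebraMap ℤ L) := by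
    rw [Polynomial.map_map, ← IsScalarTower.algebraMap_eq]
  obtain ⟨r, rfl⟩ := mem_range_algebraMap_of_natDegree_lt_two_mul_rootMultiplicity
    (hp.map (algebraMap ℤ ℚ)).ne_zero (by
      rwa [hmap, natDegree_map_eq_of_injective (RingHom.injective_int _)])
  have hroot : aeval r p = 0 := by
    have hpos : 0 < (p.map (algebraMap ℤ L)).rootMultiplicity (algebraMap ℚ L r) := by omega
    rw [rootMultiplicity_pos (hp.map _).ne_zero, IsRoot, eval_map, ← aeval_def,
      aeval_algebraMap_apply] at hpos
    exact (algebraMap ℚ L).injective (by simpa using hpos)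
  obtain ⟨z, rfl⟩ := isInteger_of_is_root_of_monic hp hroot
  exact ⟨z, by simp⟩

theorem Matrix.exists_intCast_eq_of_card_lt_two_mul_finrank_eigenspace
    {L ι : Type*} [Field L] [CharZero L] [Fintype ι] [DecidableEq ι] (A : Matrix ι ι ℤ) (μ : L)
    (hcard : Fintype.card ι <
      2 * finrank L (Module.End.eigenspace (A.map (algebraMap ℤ L)).toLin' μ)) :
    ∃ z : ℤ, (z : L) = μ := by
  refine A.charpoly_monic.exists_intCast_eq_of_natDegree_lt_two_mul_rootMultiplicity ?_
  have := LinearMap.finrank_eigenspace_le (A.map (algebraMap ℤ L)).toLin' μ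
  rw [Matrix.charpoly_toLin', Matrix.charpoly_map] at this
  rw [A.charpoly_natDegree_eq_dim]
  omega

section TwoDistanceSet

variable {ι E : Type*} [DecidableEq ι] [NormedAddCommGroup E] [InnerProductSpace ℝ E]

noncomputable def innerEqMatrix (v : ι → E) (a : ℝ) : Matrix ι ι ℤ :=
  Matrix.of fun i j => if i ≠ j ∧ ⟪v i, v j⟫_ℝ = a then 1 else 0

variable {v : ι → E} {a b : ℝ}

theorem inner_eq_ite_add_mul_innerEqMatrix (hunit : ∀ i, ‖v i‖ = 1)
    (hinner : ∀ i j, i ≠ j → ⟪v i, v j⟫_ℝ = a ∨ ⟪v i, v j⟫_ℝ = b) (i j : ι) :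
    ⟪v i, v j⟫_ℝ = (if i = j then 1 - b else 0) + b + (a - b) * innerEqMatrix v a i j := by
  by_cases hij : i = j
  · subst hij
    simp [innerEqMatrix, hunit]
  · by_cases ha : ⟪v i, v j⟫_ℝ = a
    · simp [innerEqMatrix, hij, ha]
    · simpa [innerEqMatrix, hij, ha] using (hinner i j hij).resolve_left ha

theorem innerEqMatrix_mulVec_eq_smul [Fintype ι] (hunit : ∀ i, ‖v i‖ = 1)
    (hinner : ∀ i j, i ≠ j → ⟪v i, v j⟫_ℝ = a ∨ ⟪v i, v j⟫_ℝ = b) (hab : a ≠ b) {x : ι → ℝ}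
    (hv : ∑ j, x j • v j = 0) (hx : ∑ j, x j = 0) :
    (innerEqMatrix v a).map (algebraMap ℤ ℝ) *ᵥ x = ((1 - b) / (b - a)) • x := by
  ext i
  have hrow : (1 - b) * x i + (a - b) * ((innerEqMatrix v a).map (algebraMap ℤ ℝ) *ᵥ x) i = 0 := by
    have h0 : ⟪v i, ∑ j, x j • v j⟫_ℝ = 0 := by rw [hv, inner_zero_right]
    simp only [inner_sum, inner_smul_right, inner_eq_ite_add_mul_innerEqMatrix hunit hinner i, mul_add,
      Finset.sum_add_distrib, ← Finset.sum_mul, hx, zero_mul, add_zero] at h0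
    simpa [mulVec, dotProduct, Finset.mul_sum, mul_comm, mul_left_comm] using h0
  have hba : b - a ≠ 0 := sub_ne_zero.mpr hab.symm
  simp only [Pi.smul_apply, smul_eq_mul]
  field_simp
  linear_combination -hrow

theorem exists_intCast_eq_div_of_two_mul_finrank_add_two_lt_card [Fintype ι]
    [FiniteDimensional ℝ E] (hunit : ∀ i, ‖v i‖ = 1)
    (hinner : ∀ i j, i ≠ j → ⟪v i, v j⟫_ℝ = a ∨ ⟪v i, v j⟫_ℝ = b) (hab : a ≠ b)
    (hcard : 2 * finrank ℝ E + 2 < Fintype.card ι) :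
    ∃ z : ℤ, (z : ℝ) = (1 - b) / (b - a) := by
  set f := (Fintype.linearCombination ℝ v).prod (Fintype.linearCombination ℝ fun _ : ι => (1 : ℝ))
  have hker : LinearMap.ker f ≤ Module.End.eigenspace
      ((innerEqMatrix v a).map (algebraMap ℤ ℝ)).toLin' ((1 - b) / (b - a)) := by
    intro x hx
    rw [LinearMap.ker_prod, Submodule.mem_inf, LinearMap.mem_ker, LinearMap.mem_ker,
      Fintype.linearCombination_apply, Fintype.linearCombination_apply] at hx
    rw [Module.End.mem_eigenspace_iff, Matrix.toLin'_apply]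
    exact innerEqMatrix_mulVec_eq_smul hunit hinner hab hx.1 (by simpa using hx.2)
  have hrank : Fintype.card ι ≤ finrank ℝ (LinearMap.ker f) + (finrank ℝ E + 1) := by
    have h₁ := LinearMap.finrank_range_add_finrank_ker f
    have h₂ := Submodule.finrank_le (LinearMap.range f)
    rw [Module.finrank_fintype_fun_eq_card] at h₁
    rw [Module.finrank_prod, Module.finrank_self] at h₂
    omega
  have := Submodule.finrank_mono hker
  exact (innerEqMatrix v a).exists_intCast_eq_of_card_lt_two_mul_finrank_eigenspace _ (by omega)

end TwoDistanceSet

theorem stmt11_general (d n : ℕ)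
    (a b : ℝ) (hab : a < b) (hb : b < 1)
    (v : Fin n → EuclideanSpace ℝ (Fin d))
    (hunit : ∀ i, ‖v i‖ = 1)
    (hinner : ∀ i j, i ≠ j →
      (inner ℝ (v i) (v j) : ℝ) = a ∨ (inner ℝ (v i) (v j) : ℝ) = b)
    (hn : 2 * d + 2 < n) :
    ∃ k : ℤ, Odd k ∧ 1 ≤ k ∧ (2 - a - b) / (b - a) = (k : ℝ) := by
  obtain ⟨z, hz⟩ := exists_intCast_eq_div_of_two_mul_finrank_add_two_lt_card hunit hinner
    hab.ne (by simpa using hn)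
  have hba : 0 < b - a := sub_pos.mpr hab
  have hz1 : 1 ≤ z := by
    have : (0 : ℝ) < z := hz ▸ div_pos (sub_pos.mpr hb) hba
    exact_mod_cast this
  refine ⟨2 * z + 1, odd_two_mul_add_one z, by omega, ?_⟩
  rw [eq_div_iff hba.ne'] at hz
  rw [div_eq_iff hba.ne']
  push_cast
  linarith

/-- for a spherical two-distance set with `a + b ≥ 0` in which both
inner products occur, if `n > 2d + 2` then `(2−a−b)/(b−a)` is an odd positive integer. -/
theorem stmt11 (d n : ℕ)
    (a b : ℝ) (ha : -1 ≤ a) (hab : a < b) (hb : b < 1) (hsum : 0 ≤ a + b)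
    (v : Fin n → EuclideanSpace ℝ (Fin d))
    (hunit : ∀ i, ‖v i‖ = 1)
    (hinner : ∀ i j, i ≠ j →
      (inner ℝ (v i) (v j) : ℝ) = a ∨ (inner ℝ (v i) (v j) : ℝ) = b)
    (hocca : ∃ i j, i ≠ j ∧ (inner ℝ (v i) (v j) : ℝ) = a)
    (hoccb : ∃ i j, i ≠ j ∧ (inner ℝ (v i) (v j) : ℝ) = b)
    (hn : 2 * d + 2 < n) :
    ∃ k : ℤ, Odd k ∧ 1 ≤ k ∧ (2 - a - b) / (b - a) = (k : ℝ) :=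
  stmt11_general d n a b hab hb v hunit hinner hn
end

section
/- Let −1 ≤ a < b < 1 with a + b < 0, let d ≥ 1, n > d, and let v_1, …, v_n be unit vectors in ℝ^d such that ⟨v_i, v_j⟩ ∈ {a, b} for all i ≠ j. Then there exist unit vectors w_1, …, w_n in ℝ^{d+1} such that |⟨w_i, w_j⟩| = (b − a)/(2 − a − b) for all i ≠ j; i.e., there exists an equiangular line system of n lines in ℝ^{d+1} with common angle (b − a)/(2 − a − b). In particular, n is at most the maximum number of equiangular lines in ℝ^{d+1}. -/
/-!
Append the coordinate `t = √(-(a + b) / 2)` to every vector and renormalise. Inner products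
`x` become `(x + t²) / (1 + t²)`; since `-t²` is the midpoint of `a` and `b`, this sends `a` and
`b` to `∓ (b - a) / (2 - a - b)`.
-/

open RealInnerProductSpace

noncomputable section

namespace EuclideanSpace

variable {d : ℕ}

def snocCoord (x : EuclideanSpace ℝ (Fin d)) (s : ℝ) : EuclideanSpace ℝ (Fin (d + 1)) :=
  WithLp.toLp 2 (Fin.snoc x.ofLp s)

theorem inner_snocCoord (x y : EuclideanSpace ℝ (Fin d)) (s t : ℝ) :
    ⟪snocCoord x s, snocCoord y t⟫ = ⟪x, y⟫ + s * t := by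
  simp [snocCoord, PiLp.inner_apply, Fin.sum_univ_castSucc, mul_comm]

def sphereLift (t : ℝ) (x : EuclideanSpace ℝ (Fin d)) : EuclideanSpace ℝ (Fin (d + 1)) :=
  (√(1 + t ^ 2))⁻¹ • snocCoord x t

theorem inner_sphereLift (t : ℝ) (x y : EuclideanSpace ℝ (Fin d)) :
    ⟪sphereLift t x, sphereLift t y⟫ = (⟪x, y⟫ + t ^ 2) / (1 + t ^ 2) := by
  have h : (√(1 + t ^ 2))⁻¹ * (√(1 + t ^ 2))⁻¹ = (1 + t ^ 2)⁻¹ := by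
    rw [← mul_inv, Real.mul_self_sqrt (by positivity)]
  rw [sphereLift, sphereLift, real_inner_smul_left, real_inner_smul_right, inner_snocCoord,
    ← mul_assoc, h, inv_mul_eq_div, sq]

theorem norm_sphereLift {x : EuclideanSpace ℝ (Fin d)} (hx : ‖x‖ = 1) (t : ℝ) :
    ‖sphereLift t x‖ = 1 := by
  rw [norm_eq_sqrt_real_inner, inner_sphereLift, real_inner_self_eq_norm_sq, hx, one_pow,
    div_self (by positivity), Real.sqrt_one]

end EuclideanSpace

end

open EuclideanSpace

theorem abs_add_neg_midpoint_div_eq {a b x : ℝ} (hab : a ≤ b) (hsum : a + b < 2)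
    (hx : x = a ∨ x = b) :
    |(x + -(a + b) / 2) / (1 + -(a + b) / 2)| = (b - a) / (2 - a - b) := by
  have hden : 0 < 2 - a - b := by linarith
  have hquot : (x + -(a + b) / 2) / (1 + -(a + b) / 2) = (2 * x - a - b) / (2 - a - b) := by
    rw [← mul_div_mul_left _ _ (two_ne_zero' ℝ)]
    ring_nf
  rw [hquot, abs_div, abs_of_pos hden]
  rcases hx with rfl | rfl
  · rw [show 2 * x - x - b = -(b - x) by ring, abs_neg, abs_of_nonneg (by linarith)]
  · rw [show 2 * x - a - x = x - a by ring, abs_of_nonneg (by linarith)]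

theorem stmt15_general (d n : ℕ)
    (a b : ℝ) (hab : a < b) (hsum : a + b < 0)
    (v : Fin n → EuclideanSpace ℝ (Fin d))
    (hunit : ∀ i, ‖v i‖ = 1)
    (hinner : ∀ i j, i ≠ j →
      (inner ℝ (v i) (v j) : ℝ) = a ∨ (inner ℝ (v i) (v j) : ℝ) = b) :
    ∃ w : Fin n → EuclideanSpace ℝ (Fin (d + 1)),
      (∀ i, ‖w i‖ = 1) ∧
      (∀ i j, i ≠ j → |(inner ℝ (w i) (w j) : ℝ)| = (b - a) / (2 - a - b)) := by
  have ht : √(-(a + b) / 2) ^ 2 = -(a + b) / 2 := Real.sq_sqrt (by linarith)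
  refine ⟨fun i => sphereLift √(-(a + b) / 2) (v i), fun i => norm_sphereLift (hunit i) _,
    fun i j hij => ?_⟩
  rw [inner_sphereLift, ht]
  exact abs_add_neg_midpoint_div_eq hab.le (by linarith) (hinner i j hij)

/-- an `n`-point spherical two-distance set in `S^{d-1}` with
`a + b < 0` yields an equiangular line system of `n` lines in `ℝ^{d+1}` with
common angle `(b − a)/(2 − a − b)`. -/
theorem stmt15 (d n : ℕ) (hd : 1 ≤ d) (hn : d < n)
    (a b : ℝ) (ha : -1 ≤ a) (hab : a < b) (hb : b < 1) (hsum : a + b < 0)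
    (v : Fin n → EuclideanSpace ℝ (Fin d))
    (hunit : ∀ i, ‖v i‖ = 1)
    (hinner : ∀ i j, i ≠ j →
      (inner ℝ (v i) (v j) : ℝ) = a ∨ (inner ℝ (v i) (v j) : ℝ) = b) :
    ∃ w : Fin n → EuclideanSpace ℝ (Fin (d + 1)),
      (∀ i, ‖w i‖ = 1) ∧
      (∀ i j, i ≠ j → |(inner ℝ (w i) (w j) : ℝ)| = (b - a) / (2 - a - b)) :=
  stmt15_general d n a b hab hsum v hunit hinner
end

section
/- Let −1 ≤ a < b < 1 with a + b < 0, let d ≥ 1, and set γ = (2 − a − b)/(b − a). Suppose γ² > d + 1. If v_1, …, v_n are unit vectors in ℝ^d such that ⟨v_i, v_j⟩ ∈ {a, b} for all i ≠ j, then n ≤ (d+1)·(γ² − 1)/(γ² − (d+1)). -/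
/-!
Append to every `v i` the extra coordinate `t = √(-(a+b)/2)`. The lifted vectors in `ℝ^(d+1)` all
have squared norm `s = (2-a-b)/2` and pairwise inner products `±β` with `β = (b-a)/2`, so they span
equiangular lines with `s/β = γ`. For any vectors `w_i` in `ℝ^D`, Cauchy–Schwarz on the diagonal
of the frame operator `F = ∑ w_i w_iᵀ` gives `(∑ ⟪w_i, w_i⟫)² = (tr F)² ≤ D ‖F‖²_F = D ∑ ⟪w_i, w_j⟫²`;
for the lifted family this is the relative bound `n (γ² - (d+1)) ≤ (d+1)(γ² - 1)`.
-/

open Finset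

theorem sum_sq_sum_mul_eq_sum_sq_sum_mul {R ι κ : Type*} [CommSemiring R] [Fintype ι] [Fintype κ]
    (f : ι → κ → R) :
    ∑ i, ∑ j, (∑ k, f i k * f j k) ^ 2 = ∑ k, ∑ l, (∑ i, f i k * f i l) ^ 2 := by
  simp_rw [sq, sum_mul_sum, mul_mul_mul_comm (f _ _),
    sum_comm (s := (univ : Finset ι)) (t := (univ : Finset κ))]

theorem sq_sum_inner_self_le {ι κ : Type*} [Fintype ι] [Fintype κ] (u : ι → EuclideanSpace ℝ κ) :
    (∑ i, inner ℝ (u i) (u i)) ^ 2 ≤ Fintype.card κ * ∑ i, ∑ j, inner ℝ (u i) (u j) ^ 2 := by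
  have hinner : ∀ i j, inner ℝ (u i) (u j) = ∑ k, u i k * u j k := fun i j => by
    simp [PiLp.inner_apply, mul_comm]
  simp_rw [hinner]
  rw [sum_comm, sum_sq_sum_mul_eq_sum_sq_sum_mul]
  calc (∑ k, ∑ i, u i k * u i k) ^ 2
      ≤ Fintype.card κ * ∑ k, (∑ i, u i k * u i k) ^ 2 := sq_sum_le_card_mul_sum_sq
    _ ≤ Fintype.card κ * ∑ k, ∑ l, (∑ i, u i k * u i l) ^ 2 := by
      gcongr with k
      exact single_le_sum (f := fun l => (∑ i, u i k * u i l) ^ 2) (fun _ _ => sq_nonneg _)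
        (mem_univ k)

theorem card_mul_sub_le_of_inner_eq {ι κ : Type*} [Fintype ι] [Nonempty ι] [Fintype κ]
    (w : ι → EuclideanSpace ℝ κ) (s β : ℝ)
    (hdiag : ∀ i, inner ℝ (w i) (w i) = s) (hoff : ∀ i j, i ≠ j → inner ℝ (w i) (w j) ^ 2 = β ^ 2) :
    Fintype.card ι * (s ^ 2 - Fintype.card κ * β ^ 2) ≤ Fintype.card κ * (s ^ 2 - β ^ 2) := by
  classical
  set n : ℝ := (Fintype.card ι : ℝ)
  have hrow : ∀ i, ∑ j, inner ℝ (w i) (w j) ^ 2 = s ^ 2 + (n - 1) * β ^ 2 := fun i => by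
    rw [← add_sum_erase _ _ (mem_univ i), hdiag,
      sum_congr rfl fun j hj => hoff i j (ne_of_mem_erase hj).symm]
    simp [card_erase_of_mem, n, Nat.cast_pred Fintype.card_pos]
  have h := sq_sum_inner_self_le w
  simp only [hdiag, hrow, sum_const, card_univ, nsmul_eq_mul] at h
  refine le_of_mul_le_mul_left ?_ (by positivity : (0 : ℝ) < n)
  linear_combination h

theorem EuclideanSpace.inner_toLp_snoc {d : ℕ} (x y : EuclideanSpace ℝ (Fin d)) (s t : ℝ) :
    inner ℝ (WithLp.toLp 2 (Fin.snoc x.ofLp s : Fin (d + 1) → ℝ))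
      (WithLp.toLp 2 (Fin.snoc y.ofLp t : Fin (d + 1) → ℝ)) = inner ℝ x y + s * t := by
  simp [PiLp.inner_apply, Fin.sum_univ_castSucc, mul_comm]

theorem stmt17_general (d n : ℕ)
    (a b : ℝ) (hab : a < b) (hsum : a + b < 0)
    (γ : ℝ) (hγ : γ = (2 - a - b) / (b - a)) (hγ2 : γ ^ 2 > (d : ℝ) + 1)
    (v : Fin n → EuclideanSpace ℝ (Fin d))
    (hunit : ∀ i, ‖v i‖ = 1)
    (hinner : ∀ i j, i ≠ j →
      (inner ℝ (v i) (v j) : ℝ) = a ∨ (inner ℝ (v i) (v j) : ℝ) = b) :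
    (n : ℝ) ≤ ((d : ℝ) + 1) * (γ ^ 2 - 1) / (γ ^ 2 - ((d : ℝ) + 1)) := by
  have hpos : 0 < γ ^ 2 - ((d : ℝ) + 1) := by linarith
  obtain rfl | hn := Nat.eq_zero_or_pos n
  · rw [Nat.cast_zero]
    exact div_nonneg (mul_nonneg (by positivity) (by linarith)) hpos.le
  have : NeZero n := ⟨hn.ne'⟩
  set t := √(-(a + b) / 2)
  have ht : t * t = -(a + b) / 2 := Real.mul_self_sqrt (by linarith)
  have hrel := card_mul_sub_le_of_inner_eq
    (fun i => WithLp.toLp 2 (Fin.snoc (v i).ofLp t : Fin (d + 1) → ℝ)) ((2 - a - b) / 2) ((b - a) / 2)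
    (fun i => by rw [EuclideanSpace.inner_toLp_snoc, real_inner_self_eq_norm_sq, hunit, ht]; ring)
    (fun i j hij => by
      rw [EuclideanSpace.inner_toLp_snoc, ht]
      rcases hinner i j hij with h | h <;> rw [h] <;> ring)
  have hba : 0 < b - a := sub_pos.2 hab
  have hγβ : γ * ((b - a) / 2) = (2 - a - b) / 2 := by rw [hγ]; field_simp
  rw [← hγβ, Fintype.card_fin, Fintype.card_fin] at hrel
  push_cast at hrel
  rw [le_div_iff₀ hpos]
  refine le_of_mul_le_mul_right ?_ (by positivity : 0 < ((b - a) / 2) ^ 2)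
  linear_combination hrel

/-- the relative bound for spherical two-distance sets with
`a + b < 0`, where `γ = (2−a−b)/(b−a)` and `γ² > d + 1`. -/
theorem stmt17 (d n : ℕ) (hd : 1 ≤ d)
    (a b : ℝ) (ha : -1 ≤ a) (hab : a < b) (hb : b < 1) (hsum : a + b < 0)
    (γ : ℝ) (hγ : γ = (2 - a - b) / (b - a)) (hγ2 : γ ^ 2 > (d : ℝ) + 1)
    (v : Fin n → EuclideanSpace ℝ (Fin d))
    (hunit : ∀ i, ‖v i‖ = 1)
    (hinner : ∀ i j, i ≠ j →
      (inner ℝ (v i) (v j) : ℝ) = a ∨ (inner ℝ (v i) (v j) : ℝ) = b) :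
    (n : ℝ) ≤ ((d : ℝ) + 1) * (γ ^ 2 - 1) / (γ ^ 2 - ((d : ℝ) + 1)) :=
  stmt17_general d n a b hab hsum γ hγ hγ2 v hunit hinner
end
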